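/- arXiv:1911.07425 — 6 statements merged into one kernel-verified Lean document; each statement's English description precedes it below -/
import Mathlib

section
/- For every integer r ≥ 3 and every ε > 0 there exists N such that for all n ≥ N the expected number of weakly stable cyclic matchings satisfies E[S_{n,r}] ≥ (c_r − ε)·((n·log n)/2)^{r−1}, where c_r is the (r−1)-dimensional Lebesgue volume of {y ∈ [0,1]^{r−1} : 1 ≤ y_1 + ⋯ + y_{r−1} ≤ 2} (equivalently, c_r = P(Y_1 + ⋯ + Y_{r−1} ∈ [1,2]) for independent [0,1]-uniform random variables Y_1, …, Y_{r−1}). -/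
open MeasureTheory Set

noncomputable section

/-- Sample space for the cyclic model: `ω s i j = X^{(s)}_{i,j}`,
the score that agent `i` on side `s` gives to agent `j` on side `s+1`. -/
abbrev CycSpace (r n : ℕ) := Fin r → Fin n → Fin n → ℝ

/-- The distribution of the scores: all `r·n²` entries i.i.d. uniform on `[0,1]`. -/
def cycMeasure (r n : ℕ) : Measure (CycSpace r n) :=
  Measure.pi fun _ : Fin r => Measure.pi fun _ : Fin n => Measure.pi fun _ : Fin n =>
    volume.restrict (Icc (0:ℝ) 1)

/-- A tuple `a : Fin r → Fin n` blocks the cyclic matching given by the permutations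
`σ : Fin r → Equiv.Perm (Fin n)` (matching `σ s i` on side `s` to `σ (s+1) i` on side `s+1`,
so the matched successor of agent `b` on side `s` is `σ (s+1) ((σ s)⁻¹ b)`):
every `a s` strictly prefers `a (s+1)` to its matched successor. -/
def cycBlocks {r n : ℕ} (hr : 0 < r) (ω : CycSpace r n)
    (σ : Fin r → Equiv.Perm (Fin n)) (a : Fin r → Fin n) : Prop :=
  haveI : NeZero r := ⟨hr.ne'⟩
  ∀ s : Fin r, ω s (a s) (a (s + 1)) < ω s (a s) (σ (s + 1) ((σ s)⁻¹ (a s)))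

/-- The cyclic matching given by `σ` is weakly stable: no tuple blocks it. -/
def cycWeaklyStable {r n : ℕ} (hr : 0 < r) (ω : CycSpace r n)
    (σ : Fin r → Equiv.Perm (Fin n)) : Prop :=
  ∀ a : Fin r → Fin n, ¬ cycBlocks hr ω σ a

/-- `S_{n,r}`: the number of weakly stable cyclic matchings, parametrized by
`(r−1)`-tuples of permutations, i.e. tuples `σ` with `σ 0` the identity. -/
def Scyc (r n : ℕ) (hr : 0 < r) (ω : CycSpace r n) : ℕ :=
  Nat.card {σ : Fin r → Equiv.Perm (Fin n) //
    σ ⟨0, hr⟩ = 1 ∧ cycWeaklyStable hr ω σ}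

/-- `E[S_{n,r}]`: the expected number of weakly stable cyclic matchings. -/
def EScyc (r n : ℕ) (hr : 0 < r) : ℝ :=
  ∫ ω, (Scyc r n hr ω : ℝ) ∂ cycMeasure r n

/-- `c_r`: the Lebesgue volume of `{y ∈ [0,1]^{r−1} : 1 ≤ y_1 + ⋯ + y_{r−1} ≤ 2}`. -/
def cConst (r : ℕ) : ℝ :=
  (volume {y : Fin (r - 1) → ℝ |
    (∀ i, y i ∈ Icc (0:ℝ) 1) ∧ (∑ i, y i) ∈ Icc (1:ℝ) 2}).toReal

/-!
If every agent of side `0` is matched to its strict favourite, no agent of side `0` can take part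
in a blocking tuple, so the matching is weakly stable whatever the other sides do. For `t = 1/(2n)`
and a permutation `c`, the event "each agent `i` of side `0` scores `c i` below `t` and everybody
else above `t`" is a box of probability `(t (1 - t)^(n-1))^n ≥ (4n)^(-n)`; these events are disjoint,
and on each of them the `n!^(r-2)` choices for the remaining sides are weakly stable. Hence
`E[S_{n,r}] ≥ n!^(r-1) (4n)^(-n) ≥ n!^(r-2) (4e)^(-n)`, which for `r ≥ 3` eventually exceeds every
constant multiple of `(n log n / 2)^(r-1)`.
-/

section

open Filter Nat

variable {r n : ℕ}

instance : IsProbabilityMeasure (volume.restrict (Icc (0 : ℝ) 1)) :=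
  ⟨by simp⟩

instance (r n : ℕ) : IsProbabilityMeasure (cycMeasure r n) := by
  unfold cycMeasure; infer_instance

theorem cycWeaklyStable_of_matched_le [NeZero r] {ω : CycSpace r n}
    {σ : Fin r → Equiv.Perm (Fin n)} (s : Fin r)
    (h : ∀ a b, ω s a (σ (s + 1) ((σ s)⁻¹ a)) ≤ ω s a b) :
    cycWeaklyStable (Nat.pos_of_neZero r) ω σ :=
  fun a hblock => (h (a s) (a (s + 1))).not_gt (hblock s)

theorem measurableSet_cycWeaklyStable (hr : 0 < r) (σ : Fin r → Equiv.Perm (Fin n)) :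
    MeasurableSet {ω : CycSpace r n | cycWeaklyStable hr ω σ} := by
  simp only [cycWeaklyStable, cycBlocks, ofPred_forall, ← compl_ofPred]
  exact .iInter fun a => .compl <| .iInter fun s => measurableSet_lt (by fun_prop) (by fun_prop)

theorem Scyc_eq_sum_indicator (hr : 0 < r) (ω : CycSpace r n) :
    (Scyc r n hr ω : ℝ) = ∑ σ : Fin r → Equiv.Perm (Fin n),
      {ω | σ ⟨0, hr⟩ = 1 ∧ cycWeaklyStable hr ω σ}.indicator 1 ω := by
  classical
  rw [Scyc, Nat.card_eq_fintype_card, Fintype.card_subtype, Finset.card_filter]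
  push_cast
  simp [Set.indicator_apply]

theorem integrable_Scyc (hr : 0 < r) :
    Integrable (fun ω => (Scyc r n hr ω : ℝ)) (cycMeasure r n) := by
  simp_rw [Scyc_eq_sum_indicator]
  exact integrable_finsetSum _ fun σ _ => (integrable_const 1).indicator
    ((MeasurableSet.const _).inter (measurableSet_cycWeaklyStable hr σ))

def topChoiceCells (t : ℝ) (c : Equiv.Perm (Fin n)) : Set (Fin n → Fin n → ℝ) :=
  univ.pi fun i => univ.pi fun j => if j = c i then Iio t else Ioi t

def topChoiceEvent (r : ℕ) [NeZero r] (t : ℝ) (c : Equiv.Perm (Fin n)) : Set (CycSpace r n) :=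
  (fun ω => ω 0) ⁻¹' topChoiceCells t c

theorem measurableSet_topChoiceCells (t : ℝ) (c : Equiv.Perm (Fin n)) :
    MeasurableSet (topChoiceCells t c) :=
  .univ_pi fun i => .univ_pi fun j => by
    split_ifs
    exacts [measurableSet_Iio, measurableSet_Ioi]

theorem measurableSet_topChoiceEvent [NeZero r] (t : ℝ) (c : Equiv.Perm (Fin n)) :
    MeasurableSet (topChoiceEvent r t c) :=
  measurable_pi_apply 0 (measurableSet_topChoiceCells t c)

theorem lt_of_mem_topChoiceEvent [NeZero r] {t : ℝ} {c : Equiv.Perm (Fin n)}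
    {ω : CycSpace r n} (hω : ω ∈ topChoiceEvent r t c) {i j : Fin n} (hj : j ≠ c i) :
    ω 0 i (c i) < ω 0 i j := by
  simp only [topChoiceEvent, topChoiceCells, mem_preimage, mem_univ_pi] at hω
  have hlt := hω i (c i)
  have hgt := hω i j
  rw [if_pos rfl] at hlt
  rw [if_neg hj] at hgt
  exact hlt.trans hgt

theorem pairwise_disjoint_topChoiceEvent [NeZero r] (t : ℝ) :
    Pairwise fun c c' : Equiv.Perm (Fin n) =>
      Disjoint (topChoiceEvent r t c) (topChoiceEvent r t c') := by
  refine fun c c' hne => Set.disjoint_left.2 fun ω hc hc' => hne (Equiv.ext fun i => ?_)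
  by_contra hi
  exact lt_asymm (lt_of_mem_topChoiceEvent hc (Ne.symm hi)) (lt_of_mem_topChoiceEvent hc' hi)

theorem cycMeasure_topChoiceEvent [NeZero r] {t : ℝ} (ht : t ∈ Icc (0 : ℝ) 1)
    (c : Equiv.Perm (Fin n)) :
    (cycMeasure r n).real (topChoiceEvent r t c) = (t * (1 - t) ^ (n - 1)) ^ n := by
  have hcell : ∀ i j : Fin n, volume.restrict (Icc (0 : ℝ) 1) (if j = c i then Iio t else Ioi t)
      = if j = c i then ENNReal.ofReal t else ENNReal.ofReal (1 - t) := by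
    intro i j
    split_ifs
    · have : Iio t ∩ Icc 0 1 = Ico 0 t := by
        ext x; simp only [mem_inter_iff, mem_Iio, mem_Icc, mem_Ico]; grind
      rw [Measure.restrict_apply measurableSet_Iio, this, Real.volume_Ico, sub_zero]
    · have : Ioi t ∩ Icc 0 1 = Ioc t 1 := by
        ext x; simp only [mem_inter_iff, mem_Ioi, mem_Icc, mem_Ioc]; grind
      rw [Measure.restrict_apply measurableSet_Ioi, this, Real.volume_Ioc]
  rw [measureReal_def, topChoiceEvent, cycMeasure, (measurePreserving_eval _ 0).measure_preimage
    (measurableSet_topChoiceCells t c).nullMeasurableSet, topChoiceCells]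
  simp [Measure.pi_pi, hcell, Finset.prod_ite, Finset.filter_ne', Finset.filter_eq',
    ENNReal.toReal_ofReal ht.1, ENNReal.toReal_ofReal (sub_nonneg.2 ht.2)]

theorem pow_factorial_le_Scyc [NeZero r] (hr : 2 ≤ r) {t : ℝ} {c : Equiv.Perm (Fin n)}
    {ω : CycSpace r n} (hω : ω ∈ topChoiceEvent r t c) :
    n ! ^ (r - 2) ≤ Scyc r n (Nat.pos_of_neZero r) ω := by
  obtain ⟨k, rfl⟩ : ∃ k, r = k + 2 := ⟨r - 2, by omega⟩
  let σ : (Fin k → Equiv.Perm (Fin n)) → Fin (k + 2) → Equiv.Perm (Fin n) :=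
    fun τ => Fin.cons 1 (Fin.cons c τ)
  have hstable : ∀ τ, cycWeaklyStable (Nat.pos_of_neZero _) ω (σ τ) := fun τ => by
    refine cycWeaklyStable_of_matched_le 0 fun a b => ?_
    simp only [σ, Fin.cons_zero, Fin.cons_one, zero_add, inv_one, Equiv.Perm.one_apply]
    rcases eq_or_ne b (c a) with rfl | hb
    exacts [le_rfl, (lt_of_mem_topChoiceEvent hω hb).le]
  calc n ! ^ (k + 2 - 2) = Nat.card (Fin k → Equiv.Perm (Fin n)) := by simp [Fintype.card_perm]
    _ ≤ Scyc (k + 2) n (Nat.pos_of_neZero _) ω :=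
      Nat.card_le_card_of_injective (fun τ => ⟨σ τ, Fin.cons_zero _ _, hstable τ⟩)
        fun τ τ' h => by simpa [σ, Fin.cons_inj] using congrArg Subtype.val h

theorem pow_factorial_mul_le_EScyc [NeZero r] (hr : 2 ≤ r) {t : ℝ} (ht : t ∈ Icc (0 : ℝ) 1) :
    (n ! : ℝ) ^ (r - 1) * (t * (1 - t) ^ (n - 1)) ^ n ≤ EScyc r n (Nat.pos_of_neZero r) := by
  set U := ⋃ c : Equiv.Perm (Fin n), topChoiceEvent r t c
  have hU : MeasurableSet U := .iUnion fun c => measurableSet_topChoiceEvent t c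
  have hle : ∀ ω, (n ! : ℝ) ^ (r - 2) * U.indicator 1 ω ≤ Scyc r n (Nat.pos_of_neZero r) ω := by
    intro ω
    by_cases hω : ω ∈ U
    · obtain ⟨c, hc⟩ := mem_iUnion.1 hω
      simpa [hω] using (Nat.cast_le (α := ℝ)).2 (pow_factorial_le_Scyc hr hc)
    · simp [hω]
  calc (n ! : ℝ) ^ (r - 1) * (t * (1 - t) ^ (n - 1)) ^ n
      = (n ! : ℝ) ^ (r - 2) * (cycMeasure r n).real U := by
        rw [measureReal_iUnion_fintype (pairwise_disjoint_topChoiceEvent t)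
          (measurableSet_topChoiceEvent t)]
        simp only [cycMeasure_topChoiceEvent ht, Finset.sum_const, Finset.card_univ,
          Fintype.card_perm, Fintype.card_fin, nsmul_eq_mul]
        rw [← mul_assoc, ← pow_succ, show r - 2 + 1 = r - 1 by omega]
    _ = ∫ ω, (n ! : ℝ) ^ (r - 2) * U.indicator 1 ω ∂cycMeasure r n := by
        rw [integral_const_mul, integral_indicator_one hU]
    _ ≤ EScyc r n (Nat.pos_of_neZero r) :=
        integral_mono ((integrable_const 1).indicator hU |>.const_mul _) (integrable_Scyc _) hle

theorem inv_four_mul_exp_pow_le_factorial_mul {n : ℕ} (hn : 1 ≤ n) :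
    (4 * Real.exp 1)⁻¹ ^ n ≤
      n ! * ((2 * n : ℝ)⁻¹ * (1 - (2 * n : ℝ)⁻¹) ^ (n - 1)) ^ n := by
  have hn' : (1 : ℝ) ≤ n := by exact_mod_cast hn
  have hbernoulli : (1 / 2 : ℝ) ≤ (1 - (2 * n : ℝ)⁻¹) ^ (n - 1) := by
    have h := one_add_mul_le_pow (a := -(2 * n : ℝ)⁻¹) (by
      have : (2 * n : ℝ)⁻¹ ≤ 1 := inv_le_one_of_one_le₀ (by linarith)
      linarith) (n - 1)
    rw [Nat.cast_sub hn, ← sub_eq_add_neg] at h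
    refine le_trans ?_ h
    field_simp
    linarith
  have hstirling : (n : ℝ) ^ n ≤ Real.exp n * n ! := by
    have := Real.pow_div_factorial_le_exp _ (Nat.cast_nonneg (α := ℝ) n) n
    rwa [div_le_iff₀ (by positivity)] at this
  calc (4 * Real.exp 1)⁻¹ ^ n ≤ n ! * (4 * n : ℝ)⁻¹ ^ n := by
        rw [inv_pow, inv_pow, ← div_eq_mul_inv, le_div_iff₀ (by positivity), inv_mul_le_iff₀
          (by positivity), mul_pow, mul_pow, Real.exp_one_pow, mul_assoc]
        gcongr
    _ ≤ n ! * ((2 * n : ℝ)⁻¹ * (1 - (2 * n : ℝ)⁻¹) ^ (n - 1)) ^ n := by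
        gcongr
        calc (4 * n : ℝ)⁻¹ = (2 * n : ℝ)⁻¹ * (1 / 2) := by field_simp; ring
          _ ≤ _ := by gcongr

theorem eventually_mul_pow_le_factorial (C x : ℝ) : ∀ᶠ n : ℕ in atTop, C * x ^ n ≤ n ! := by
  filter_upwards [((FloorSemiring.tendsto_pow_div_factorial_atTop x).const_mul C).eventually
    (gt_mem_nhds (by norm_num : C * 0 < 1))] with n hn
  rw [← mul_div_assoc, div_lt_one (by positivity)] at hn
  exact hn.le

theorem eventually_const_mul_le_EScyc [NeZero r] (hr : 3 ≤ r) (C : ℝ) :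
    ∀ᶠ n : ℕ in atTop, C * ((n * Real.log n) / 2) ^ (r - 1) ≤
      EScyc r n (Nat.pos_of_neZero r) := by
  set k := r - 1
  filter_upwards [eventually_mul_pow_le_factorial (max C 0 * 2 ^ k) (4 * Real.exp 1 * Real.exp k),
    eventually_ge_atTop 1] with n hfac hn
  have hn' : (1 : ℝ) ≤ n := by exact_mod_cast hn
  have hprob := inv_four_mul_exp_pow_le_factorial_mul hn
  set t : ℝ := (2 * n)⁻¹
  have ht : t ∈ Icc (0 : ℝ) 1 := ⟨by positivity, inv_le_one_of_one_le₀ (by linarith)⟩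
  have hlog : n * Real.log n / 2 ≤ (n : ℝ) ^ 2 := by
    nlinarith [Real.log_le_self (Nat.cast_nonneg (α := ℝ) n), Real.log_nonneg hn']
  have hsq : (n : ℝ) ^ 2 ≤ 2 * Real.exp n := by
    have := Real.pow_div_factorial_le_exp _ (Nat.cast_nonneg (α := ℝ) n) 2
    norm_num at this
    linarith
  calc C * ((n * Real.log n) / 2) ^ k
      ≤ max C 0 * ((n : ℝ) ^ 2) ^ k := by
        have hB : 0 ≤ n * Real.log n / 2 := by positivity [Real.log_nonneg hn']
        exact mul_le_mul (le_max_left _ _) (pow_le_pow_left₀ hB hlog k) (by positivity)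
          (le_max_right _ _)
    _ ≤ max C 0 * (2 * Real.exp n) ^ k := by gcongr
    _ = max C 0 * 2 ^ k * (4 * Real.exp 1 * Real.exp k) ^ n * (4 * Real.exp 1)⁻¹ ^ n := by
        have hexp : Real.exp n ^ k = Real.exp k ^ n := by
          rw [← Real.exp_nat_mul, ← Real.exp_nat_mul, mul_comm]
        rw [mul_pow 2, hexp, mul_pow (4 * Real.exp 1), inv_pow]
        field_simp
    _ ≤ n ! * (n ! * (t * (1 - t) ^ (n - 1)) ^ n) := by gcongr
    _ ≤ (n ! : ℝ) ^ k * (t * (1 - t) ^ (n - 1)) ^ n := by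
        rw [← mul_assoc, show k = k - 1 + 1 by omega, pow_succ]
        have : (n ! : ℝ) ≤ (n ! : ℝ) ^ (k - 1) :=
          le_self_pow₀ (by exact_mod_cast n.factorial_pos) (by omega)
        gcongr
        exact pow_nonneg (mul_nonneg ht.1 (pow_nonneg (sub_nonneg.2 ht.2) _)) _
    _ ≤ EScyc r n (Nat.pos_of_neZero r) := pow_factorial_mul_le_EScyc (by omega) ht

end

/-- For every `r ≥ 3` and `ε > 0`, for all large `n`,
`E[S_{n,r}] ≥ (c_r − ε)·((n·log n)/2)^{r−1}`. -/
theorem expected_cyclic_weakly_stable_lower_bound (r : ℕ) (hr : 3 ≤ r)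
    (ε : ℝ) :
    ∃ N : ℕ, ∀ n : ℕ, N ≤ n →
      (cConst r - ε) * (((n : ℝ) * Real.log n) / 2) ^ (r - 1) ≤
        EScyc r n (by omega) := by
  have : NeZero r := ⟨by omega⟩
  exact Filter.eventually_atTop.1 (eventually_const_mul_le_EScyc hr (cConst r - ε))
end
end

section
/- The probability that the identity permutation is weakly stable equals ∫_{([0,1]^{k₁})^n} ∫_{([0,1]^{k₂})^n} ∏_{1 ≤ i ≠ j ≤ n} (1 − ∏_{u∈[k₁]} x_{i,u} · ∏_{v∈[k₂]} y_{j,v}) dy dx, and consequently E[S_{n,w}] = n! times this integral. -/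
open MeasureTheory Set

noncomputable section

/-- Strict vector order: every coordinate strictly smaller. -/
def vlt {k : ℕ} (u v : Fin k → ℝ) : Prop := ∀ t, u t < v t

/-- Sample space: the `2n²` preference vectors `X_i^{(j)} = ω.1 i j ∈ [0,1]^{k₁}` and
`Y_j^{(i)} = ω.2 j i ∈ [0,1]^{k₂}`. -/
abbrev PrefSpace (n k₁ k₂ : ℕ) :=
  (Fin n → Fin n → Fin k₁ → ℝ) × (Fin n → Fin n → Fin k₂ → ℝ)

/-- Uniform probability measure on the cube `[0,1]^k`. -/
def cubeMeasure (k : ℕ) : Measure (Fin k → ℝ) :=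
  Measure.pi fun _ => volume.restrict (Icc (0:ℝ) 1)

/-- The distribution of the whole family: all `2n²` vectors independent,
uniform on their respective cubes. -/
def prefMeasure (n k₁ k₂ : ℕ) : Measure (PrefSpace n k₁ k₂) :=
  (Measure.pi fun _ : Fin n => Measure.pi fun _ : Fin n => cubeMeasure k₁).prod
    (Measure.pi fun _ : Fin n => Measure.pi fun _ : Fin n => cubeMeasure k₂)

/-- The pair `(i,j)` w-blocks `σ`. -/
def wBlocks {n k₁ k₂ : ℕ} (ω : PrefSpace n k₁ k₂) (σ : Equiv.Perm (Fin n))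
    (i j : Fin n) : Prop :=
  vlt (ω.1 i j) (ω.1 i (σ i)) ∧ vlt (ω.2 j i) (ω.2 j (σ⁻¹ j))

/-- The pair `(i,j)` s-blocks `σ`. -/
def sBlocks {n k₁ k₂ : ℕ} (ω : PrefSpace n k₁ k₂) (σ : Equiv.Perm (Fin n))
    (i j : Fin n) : Prop :=
  (vlt (ω.1 i j) (ω.1 i (σ i)) ∧ ¬ vlt (ω.2 j (σ⁻¹ j)) (ω.2 j i)) ∨
  (¬ vlt (ω.1 i (σ i)) (ω.1 i j) ∧ vlt (ω.2 j i) (ω.2 j (σ⁻¹ j)))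

/-- The pair `(i,j)` sup-blocks `σ`. -/
def supBlocks {n k₁ k₂ : ℕ} (ω : PrefSpace n k₁ k₂) (σ : Equiv.Perm (Fin n))
    (i j : Fin n) : Prop :=
  ¬ vlt (ω.1 i (σ i)) (ω.1 i j) ∧ ¬ vlt (ω.2 j (σ⁻¹ j)) (ω.2 j i)

/-- `σ` is weakly stable. -/
def weaklyStable {n k₁ k₂ : ℕ} (ω : PrefSpace n k₁ k₂) (σ : Equiv.Perm (Fin n)) : Prop :=
  ∀ i j, j ≠ σ i → ¬ wBlocks ω σ i j

/-- `σ` is strongly stable. -/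
def stronglyStable {n k₁ k₂ : ℕ} (ω : PrefSpace n k₁ k₂) (σ : Equiv.Perm (Fin n)) : Prop :=
  ∀ i j, j ≠ σ i → ¬ sBlocks ω σ i j

/-- `σ` is super-stable. -/
def superStable {n k₁ k₂ : ℕ} (ω : PrefSpace n k₁ k₂) (σ : Equiv.Perm (Fin n)) : Prop :=
  ∀ i j, j ≠ σ i → ¬ supBlocks ω σ i j

/-- Number of weakly stable permutations. -/
def Sw (n k₁ k₂ : ℕ) (ω : PrefSpace n k₁ k₂) : ℕ :=
  Nat.card {σ : Equiv.Perm (Fin n) // weaklyStable ω σ}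

/-- Number of strongly stable permutations. -/
def Ss (n k₁ k₂ : ℕ) (ω : PrefSpace n k₁ k₂) : ℕ :=
  Nat.card {σ : Equiv.Perm (Fin n) // stronglyStable ω σ}

/-- Number of super-stable permutations. -/
def Ssup (n k₁ k₂ : ℕ) (ω : PrefSpace n k₁ k₂) : ℕ :=
  Nat.card {σ : Equiv.Perm (Fin n) // superStable ω σ}

/-- Expected number of weakly stable permutations. -/
def ESw (n k₁ k₂ : ℕ) : ℝ := ∫ ω, (Sw n k₁ k₂ ω : ℝ) ∂ prefMeasure n k₁ k₂

/-- Expected number of strongly stable permutations. -/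
def ESs (n k₁ k₂ : ℕ) : ℝ := ∫ ω, (Ss n k₁ k₂ ω : ℝ) ∂ prefMeasure n k₁ k₂

/-- Expected number of super-stable permutations. -/
def ESsup (n k₁ k₂ : ℕ) : ℝ := ∫ ω, (Ssup n k₁ k₂ ω : ℝ) ∂ prefMeasure n k₁ k₂

/-!
Condition on the diagonal vectors `d i = X_i^{(i)}` and `e j = Y_j^{(j)}`. Given them, the events
"`(i, j)` w-blocks the identity" for `i ≠ j` involve the disjoint pairs of fresh vectors
`X_i^{(j)}, Y_j^{(i)}`, so they are independent, each of probability
`P(X < d i) P(Y < e j) = (∏ u, d i u) (∏ v, e j v)`. Integrating out first the men's and then the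
women's off-diagonal vectors yields the integral. Relabelling the women by `σ` preserves the
measure and turns weak stability of `σ` into weak stability of the identity, so each of the `n!`
permutations is weakly stable with the same probability.
-/

open ENNReal ProbabilityTheory

section Product

variable {ι : Type*} [Fintype ι]

theorem lintegral_pi_finset_prod {Ω : ι → Type*} [∀ i, MeasurableSpace (Ω i)]
    (μ : ∀ i, Measure (Ω i)) [∀ i, IsProbabilityMeasure (μ i)]
    (s : Finset ι) {f : ∀ i, Ω i → ℝ≥0∞} (hf : ∀ i, Measurable (f i)) :
    ∫⁻ x, ∏ i ∈ s, f i (x i) ∂Measure.pi μ = ∏ i ∈ s, ∫⁻ z, f i z ∂μ i := by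
  rw [lintegral_prod_eq_prod_lintegral_of_indepFun s _
    (iIndepFun_pi fun i => (hf i).aemeasurable) fun i => (hf i).comp (measurable_pi_apply i)]
  exact Finset.prod_congr rfl fun i _ => (measurePreserving_eval μ i).lintegral_comp (hf i)

theorem measurePreserving_comp_perm {C : Type*} [MeasurableSpace C] (μ : Measure C)
    [SigmaFinite μ] (σ : Equiv.Perm ι) :
    MeasurePreserving (fun f : ι → C => f ∘ σ) (Measure.pi fun _ => μ) (Measure.pi fun _ => μ) :=
  measurePreserving_arrowCongr' (fun _ => μ) (fun _ => μ) σ.symm (MeasurableEquiv.refl C)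
    fun _ => .id μ

theorem Finset.prod_prod_erase_comm [DecidableEq ι] {M : Type*} [CommMonoid M] (f : ι → ι → M) :
    ∏ i, ∏ j ∈ Finset.univ.erase i, f i j = ∏ j, ∏ i ∈ Finset.univ.erase j, f i j :=
  Finset.prod_comm' fun _ _ => by simp [ne_comm]

end Product

section Pivot

variable {ι C : Type*} [Fintype ι] [DecidableEq ι] [MeasurableSpace C]
  (μ : Measure C) [IsProbabilityMeasure μ]

/-- The old value `p.2 j` is forgotten, which costs nothing because `μ` has mass one. -/
theorem measurePreserving_update (j : ι) :
    MeasurePreserving (fun p : C × (ι → C) => Function.update p.2 j p.1)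
      (μ.prod (Measure.pi fun _ => μ)) (Measure.pi fun _ => μ) := by
  have hm : Measurable fun p : C × (ι → C) => Function.update p.2 j p.1 :=
    measurable_update'.comp measurable_swap
  refine ⟨hm, (Measure.pi_eq fun s hs => ?_).symm⟩
  have hpre : (fun p : C × (ι → C) => Function.update p.2 j p.1) ⁻¹' Set.pi univ s
      = s j ×ˢ Set.pi univ (Function.update s j univ) := by
    ext p
    simp only [Set.mem_preimage, Set.mem_pi, Set.mem_univ, true_implies, Set.mem_prod]
    refine ⟨fun h => ⟨by simpa using h j, fun i => ?_⟩, fun h i => ?_⟩ <;>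
      rcases eq_or_ne i j with rfl | hij
    · simp
    · simpa [Function.update_of_ne hij] using h i
    · simpa using h.1
    · simpa [Function.update_of_ne hij] using h.2 i
  rw [Measure.map_apply hm (.univ_pi hs), hpre, Measure.prod_prod, Measure.pi_pi,
    ← Finset.mul_prod_erase Finset.univ _ (Finset.mem_univ j),
    ← Finset.mul_prod_erase Finset.univ _ (Finset.mem_univ j)]
  simp only [Function.update_self, measure_univ, one_mul]
  exact congrArg _ (Finset.prod_congr rfl fun i hi => by
    rw [Function.update_of_ne (Finset.ne_of_mem_erase hi)])

theorem lintegral_pi_prod_erase (j : ι) {g : ι → C → C → ℝ≥0∞}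
    (hg : ∀ i, Measurable (Function.uncurry (g i))) :
    ∫⁻ x, ∏ i ∈ Finset.univ.erase j, g i (x i) (x j) ∂Measure.pi (fun _ => μ)
      = ∫⁻ w, ∏ i ∈ Finset.univ.erase j, ∫⁻ z, g i z w ∂μ ∂μ := by
  have hF : Measurable fun x : ι → C => ∏ i ∈ Finset.univ.erase j, g i (x i) (x j) :=
    Finset.measurable_prod _ fun i _ => (hg i).comp (f := fun x : ι → C => (x i, x j))
      ((measurable_pi_apply i).prodMk (measurable_pi_apply j))
  rw [← (measurePreserving_update μ j).lintegral_comp hF]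
  refine (lintegral_prod _ (hF.comp (measurePreserving_update μ j).measurable).aemeasurable).trans
    (lintegral_congr fun w => ?_)
  rw [← lintegral_pi_finset_prod (fun _ => μ) _ (f := fun i z => g i z w)
    fun i => (hg i).comp measurable_prodMk_right]
  refine lintegral_congr fun x => Finset.prod_congr rfl fun i hi => ?_
  simp [Function.update_of_ne (Finset.ne_of_mem_erase hi)]

theorem lintegral_one_sub_const_mul_indicator {s : Set C} (hs : MeasurableSet s)
    {b : ℝ≥0∞} (hb : b ≤ 1) :
    ∫⁻ z, (1 - b * s.indicator 1 z) ∂μ = 1 - b * μ s := by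
  have hle : ∀ z, b * s.indicator 1 z ≤ 1 := fun z =>
    mul_le_one' hb (Set.indicator_apply_le' (fun _ => le_rfl) fun _ => zero_le_one)
  rw [lintegral_sub (f := fun _ => 1) (g := fun z => b * s.indicator 1 z)
      (measurable_const.mul (measurable_one.indicator hs))
      (ne_top_of_le_ne_top one_ne_top ((lintegral_mono hle).trans (by simp)))
      (.of_forall hle),
    lintegral_const_mul _ (measurable_one.indicator hs), lintegral_indicator_one hs]
  simp

/-- Given its diagonal entry `x a a`, the off-diagonal entries of row `a` are independent. -/
theorem lintegral_pi_pi_prod_one_sub_mul_indicator {r : C → C → Prop}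
    (hr : MeasurableSet {p : C × C | r p.1 p.2}) {b : ι → ι → ℝ≥0∞} (hb : ∀ a c, b a c ≤ 1) :
    ∫⁻ x : ι → ι → C, ∏ a, ∏ c ∈ Finset.univ.erase a,
        (1 - b a c * {z | r z (x a a)}.indicator 1 (x a c))
      ∂Measure.pi (fun _ => Measure.pi fun _ => μ)
      = ∫⁻ w : ι → C, ∏ a, ∏ c ∈ Finset.univ.erase a, (1 - b a c * μ {z | r z (w a)})
      ∂Measure.pi fun _ => μ := by
  have hg : ∀ a c, Measurable (Function.uncurry fun z w : C =>
      1 - b a c * {z | r z w}.indicator (1 : C → ℝ≥0∞) z) := fun a c =>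
    measurable_const.sub (measurable_const.mul (measurable_one.indicator hr))
  rw [lintegral_pi_finset_prod _ _ (f := fun a (x : ι → C) => ∏ c ∈ Finset.univ.erase a,
      (1 - b a c * {z | r z (x a)}.indicator 1 (x c)))
      fun a => Finset.measurable_prod _ fun c _ => (hg a c).comp (f := fun x : ι → C => (x c, x a))
        ((measurable_pi_apply c).prodMk (measurable_pi_apply a)),
    lintegral_pi_finset_prod _ _ (f := fun a (w : C) => ∏ c ∈ Finset.univ.erase a,
      (1 - b a c * μ {z | r z w}))
      fun a => Finset.measurable_prod _ fun c _ =>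
        measurable_const.sub (measurable_const.mul (measurable_measure_prodMk_right hr))]
  refine Finset.prod_congr rfl fun a _ => ?_
  rw [lintegral_pi_prod_erase μ a (hg a)]
  exact lintegral_congr fun w => Finset.prod_congr rfl fun c _ =>
    lintegral_one_sub_const_mul_indicator μ (measurable_prodMk_right hr) (hb a c)

end Pivot

theorem toReal_lintegral_lintegral {α β : Type*} [MeasurableSpace α] [MeasurableSpace β]
    {μ : Measure α} {ν : Measure β} [IsFiniteMeasure ν] {f : α → β → ℝ≥0∞}
    (hf : Measurable (Function.uncurry f)) (hf_le : ∀ a b, f a b ≤ 1) :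
    (∫⁻ a, ∫⁻ b, f a b ∂ν ∂μ).toReal = ∫ a, ∫ b, (f a b).toReal ∂ν ∂μ := by
  have hfin : ∀ a, ∫⁻ b, f a b ∂ν < ∞ := fun a =>
    (lintegral_mono (hf_le a)).trans_lt (by simp [measure_lt_top])
  rw [← integral_toReal hf.lintegral_prod_right.aemeasurable (ae_of_all _ hfin)]
  exact integral_congr_ae (ae_of_all _ fun a => (integral_toReal
    (hf.comp measurable_prodMk_left).aemeasurable
    (ae_of_all _ fun b => (hf_le a b).trans_lt one_lt_top)).symm)

theorem toReal_one_sub_ofReal_mul_ofReal {a b : ℝ} (ha : a ∈ Icc (0 : ℝ) 1)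
    (hb : b ∈ Icc (0 : ℝ) 1) :
    (1 - ENNReal.ofReal a * ENNReal.ofReal b).toReal = 1 - a * b := by
  rw [← ENNReal.ofReal_mul ha.1, ← ENNReal.ofReal_one,
    ← ENNReal.ofReal_sub _ (mul_nonneg ha.1 hb.1),
    ENNReal.toReal_ofReal (sub_nonneg.2 (mul_le_one₀ ha.2 hb.1 hb.2))]

theorem prod_mem_Icc_zero_one {k : ℕ} {c : Fin k → ℝ} (hc : ∀ v, c v ∈ Icc (0 : ℝ) 1) :
    ∏ v, c v ∈ Icc (0 : ℝ) 1 :=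
  ⟨Finset.prod_nonneg fun v _ => (hc v).1,
    Finset.prod_le_one (fun v _ => (hc v).1) fun v _ => (hc v).2⟩

instance isProbabilityMeasure_cubeMeasure (k : ℕ) : IsProbabilityMeasure (cubeMeasure k) := by
  have : IsProbabilityMeasure (volume.restrict (Icc (0 : ℝ) 1)) := ⟨by simp⟩
  unfold cubeMeasure; infer_instance

instance isProbabilityMeasure_prefMeasure (n k₁ k₂ : ℕ) :
    IsProbabilityMeasure (prefMeasure n k₁ k₂) := by
  unfold prefMeasure; infer_instance

theorem cubeMeasure_setOf_vlt {k : ℕ} {c : Fin k → ℝ} (hc : ∀ v, c v ∈ Icc (0 : ℝ) 1) :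
    cubeMeasure k {z | vlt z c} = ENNReal.ofReal (∏ v, c v) := by
  have hbox : {z | vlt z c} = Set.pi univ fun v => Iio (c v) := by
    ext z; simp [vlt]
  rw [cubeMeasure, hbox, Measure.pi_pi, ENNReal.ofReal_prod_of_nonneg fun v _ => (hc v).1]
  refine Finset.prod_congr rfl fun v _ => ?_
  have hIco : Iio (c v) ∩ Icc 0 1 = Ico 0 (c v) :=
    Set.ext fun z => ⟨fun h => ⟨h.2.1, h.1⟩, fun h => ⟨h.2, h.1, h.2.le.trans (hc v).2⟩⟩
  rw [Measure.restrict_apply measurableSet_Iio, hIco, Real.volume_Ico, sub_zero]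

theorem ae_mem_Icc_pi_cubeMeasure (n k : ℕ) :
    ∀ᵐ d ∂Measure.pi (fun _ : Fin n => cubeMeasure k), ∀ i v, d i v ∈ Icc (0 : ℝ) 1 := by
  have hcube : ∀ᵐ c ∂cubeMeasure k, ∀ v, c v ∈ Icc (0 : ℝ) 1 :=
    ae_all_iff.2 fun v => (Measure.tendsto_eval_ae_ae (i := v)
      (μ := fun _ => volume.restrict (Icc (0 : ℝ) 1))).eventually
        (ae_restrict_mem measurableSet_Icc)
  exact ae_all_iff.2 fun i =>
    (Measure.tendsto_eval_ae_ae (i := i) (μ := fun _ => cubeMeasure k)).eventually hcube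

theorem measurableSet_vlt (k : ℕ) :
    MeasurableSet {p : (Fin k → ℝ) × (Fin k → ℝ) | vlt p.1 p.2} :=
  measurableSet_setOfPred.2 <| Measurable.forall fun _ => measurableSet_setOfPred.1 <|
    measurableSet_lt (measurable_fst.eval) (measurable_snd.eval)

theorem measurable_cubeMeasure_setOf_vlt (k : ℕ) :
    Measurable fun c : Fin k → ℝ => cubeMeasure k {z | vlt z c} :=
  measurable_measure_prodMk_right (measurableSet_vlt k)

theorem measurableSet_weaklyStable (n k₁ k₂ : ℕ) (σ : Equiv.Perm (Fin n)) :
    MeasurableSet {ω : PrefSpace n k₁ k₂ | weaklyStable ω σ} := by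
  have hvlt₁ := measurableSet_setOfPred.1 (measurableSet_vlt k₁)
  have hvlt₂ := measurableSet_setOfPred.1 (measurableSet_vlt k₂)
  refine measurableSet_setOfPred.2 <| Measurable.forall fun i => Measurable.forall fun j =>
    measurable_const.imp (Measurable.not (Measurable.and ?_ ?_))
  · exact hvlt₁.comp (f := fun ω : PrefSpace n k₁ k₂ => (ω.1 i j, ω.1 i (σ i))) (by fun_prop)
  · exact hvlt₂.comp (f := fun ω : PrefSpace n k₁ k₂ => (ω.2 j i, ω.2 j (σ⁻¹ j))) (by fun_prop)

theorem indicator_setOf_weaklyStable_one {n k₁ k₂ : ℕ} (x : Fin n → Fin n → Fin k₁ → ℝ)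
    (y : Fin n → Fin n → Fin k₂ → ℝ) :
    {ω : PrefSpace n k₁ k₂ | weaklyStable ω 1}.indicator (1 : PrefSpace n k₁ k₂ → ℝ≥0∞) (x, y)
      = ∏ i, ∏ j ∈ Finset.univ.erase i,
          (1 - {z | vlt z (y j j)}.indicator 1 (y j i) *
            {z | vlt z (x i i)}.indicator 1 (x i j)) := by
  by_cases h : weaklyStable (x, y) 1
  · rw [Set.indicator_of_mem h, Pi.one_apply, eq_comm]
    refine Finset.prod_eq_one fun i _ => Finset.prod_eq_one fun j hj => ?_
    have hij : vlt (x i j) (x i i) → ¬vlt (y j i) (y j j) := by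
      simpa [wBlocks] using h i j (Finset.ne_of_mem_erase hj)
    by_cases hx : vlt (x i j) (x i i)
    · simp [hx, hij hx]
    · simp [hx]
  · rw [Set.indicator_of_notMem h, eq_comm]
    obtain ⟨i, j, hji, hb⟩ : ∃ i j, j ≠ i ∧ vlt (x i j) (x i i) ∧ vlt (y j i) (y j j) := by
      simpa [weaklyStable, wBlocks] using h
    exact Finset.prod_eq_zero (Finset.mem_univ i)
      (Finset.prod_eq_zero (Finset.mem_erase.2 ⟨hji, Finset.mem_univ j⟩) (by simp [hb.1, hb.2]))

theorem lintegral_indicator_setOf_weaklyStable_one_fst {n k₁ k₂ : ℕ}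
    (y : Fin n → Fin n → Fin k₂ → ℝ) :
    ∫⁻ x, {ω : PrefSpace n k₁ k₂ | weaklyStable ω 1}.indicator 1 (x, y)
        ∂Measure.pi (fun _ => Measure.pi fun _ => cubeMeasure k₁)
      = ∫⁻ d, ∏ i, ∏ j ∈ Finset.univ.erase i,
          (1 - {z | vlt z (y j j)}.indicator 1 (y j i) * cubeMeasure k₁ {z | vlt z (d i)})
        ∂Measure.pi (fun _ => cubeMeasure k₁) := by
  rw [lintegral_congr fun x => indicator_setOf_weaklyStable_one x y]
  exact lintegral_pi_pi_prod_one_sub_mul_indicator _ (measurableSet_vlt k₁) fun _ _ =>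
    Set.indicator_apply_le' (fun _ => le_rfl) fun _ => zero_le_one

theorem prefMeasure_setOf_weaklyStable_one (n k₁ k₂ : ℕ) :
    prefMeasure n k₁ k₂ {ω | weaklyStable ω 1}
      = ∫⁻ d, ∫⁻ e, ∏ i, ∏ j ∈ Finset.univ.erase i,
          (1 - cubeMeasure k₁ {z | vlt z (d i)} * cubeMeasure k₂ {z | vlt z (e j)})
        ∂Measure.pi (fun _ : Fin n => cubeMeasure k₂)
        ∂Measure.pi (fun _ : Fin n => cubeMeasure k₁) := by
  have hS := measurableSet_weaklyStable n k₁ k₂ 1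
  have hind : Measurable (Function.uncurry fun z c : Fin k₂ → ℝ =>
      {z | vlt z c}.indicator (1 : (Fin k₂ → ℝ) → ℝ≥0∞) z) :=
    measurable_one.indicator (measurableSet_vlt k₂)
  have hF : Measurable (Function.uncurry fun (y : Fin n → Fin n → Fin k₂ → ℝ)
      (d : Fin n → Fin k₁ → ℝ) => ∏ i, ∏ j ∈ Finset.univ.erase i,
        (1 - {z | vlt z (y j j)}.indicator 1 (y j i) * cubeMeasure k₁ {z | vlt z (d i)})) :=
    Finset.measurable_prod _ fun i _ => Finset.measurable_prod _ fun j _ =>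
      measurable_const.sub <| Measurable.mul
        (hind.comp (f := fun p : (Fin n → Fin n → Fin k₂ → ℝ) × (Fin n → Fin k₁ → ℝ) =>
          (p.1 j i, p.1 j j)) (by fun_prop))
        ((measurable_cubeMeasure_setOf_vlt k₁).comp
          (f := fun p : (Fin n → Fin n → Fin k₂ → ℝ) × (Fin n → Fin k₁ → ℝ) => p.2 i)
          (by fun_prop))
  rw [← lintegral_indicator_one hS, prefMeasure,
    lintegral_prod_symm _ (measurable_one.indicator hS).aemeasurable]
  simp_rw [lintegral_indicator_setOf_weaklyStable_one_fst]
  rw [lintegral_lintegral_swap hF.aemeasurable]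
  refine lintegral_congr fun d => ?_
  calc ∫⁻ y, ∏ i, ∏ j ∈ Finset.univ.erase i,
        (1 - {z | vlt z (y j j)}.indicator 1 (y j i) * cubeMeasure k₁ {z | vlt z (d i)})
        ∂Measure.pi (fun _ => Measure.pi fun _ => cubeMeasure k₂)
      = ∫⁻ y, ∏ j, ∏ i ∈ Finset.univ.erase j,
        (1 - cubeMeasure k₁ {z | vlt z (d i)} * {z | vlt z (y j j)}.indicator 1 (y j i))
        ∂Measure.pi (fun _ => Measure.pi fun _ => cubeMeasure k₂) := by
        refine lintegral_congr fun y => ?_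
        rw [Finset.prod_prod_erase_comm]
        simp only [mul_comm]
    _ = _ := by
        rw [lintegral_pi_pi_prod_one_sub_mul_indicator _ (measurableSet_vlt k₂)
          fun _ _ => prob_le_one]
        exact lintegral_congr fun e => Finset.prod_prod_erase_comm _

theorem toReal_prefMeasure_setOf_weaklyStable_one (n k₁ k₂ : ℕ) :
    (prefMeasure n k₁ k₂ {ω | weaklyStable ω (1 : Equiv.Perm (Fin n))}).toReal =
      ∫ x : Fin n → Fin k₁ → ℝ, ∫ y : Fin n → Fin k₂ → ℝ,
          ∏ i : Fin n, ∏ j ∈ Finset.univ.erase i, (1 - (∏ u, x i u) * ∏ v, y j v)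
        ∂(Measure.pi fun _ : Fin n => cubeMeasure k₂)
        ∂(Measure.pi fun _ : Fin n => cubeMeasure k₁) := by
  have hF : Measurable (Function.uncurry fun (x : Fin n → Fin k₁ → ℝ) (y : Fin n → Fin k₂ → ℝ) =>
      ∏ i, ∏ j ∈ Finset.univ.erase i,
        (1 - cubeMeasure k₁ {z | vlt z (x i)} * cubeMeasure k₂ {z | vlt z (y j)})) :=
    Finset.measurable_prod _ fun i _ => Finset.measurable_prod _ fun j _ =>
      measurable_const.sub <| Measurable.mul
        ((measurable_cubeMeasure_setOf_vlt k₁).comp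
          (f := fun p : (Fin n → Fin k₁ → ℝ) × (Fin n → Fin k₂ → ℝ) => p.1 i) (by fun_prop))
        ((measurable_cubeMeasure_setOf_vlt k₂).comp
          (f := fun p : (Fin n → Fin k₁ → ℝ) × (Fin n → Fin k₂ → ℝ) => p.2 j) (by fun_prop))
  rw [prefMeasure_setOf_weaklyStable_one, toReal_lintegral_lintegral hF
    fun _ _ => Finset.prod_le_one' fun _ _ => Finset.prod_le_one' fun _ _ => tsub_le_self]
  refine integral_congr_ae ?_
  filter_upwards [ae_mem_Icc_pi_cubeMeasure n k₁] with x hx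
  refine integral_congr_ae ?_
  filter_upwards [ae_mem_Icc_pi_cubeMeasure n k₂] with y hy
  simp only [ENNReal.toReal_prod]
  refine Finset.prod_congr rfl fun i _ => Finset.prod_congr rfl fun j _ => ?_
  rw [cubeMeasure_setOf_vlt (hx i), cubeMeasure_setOf_vlt (hy j),
    toReal_one_sub_ofReal_mul_ofReal (prod_mem_Icc_zero_one (hx i))
      (prod_mem_Icc_zero_one (hy j))]

theorem weaklyStable_iff_relabel {n k₁ k₂ : ℕ} (ω : PrefSpace n k₁ k₂) (σ : Equiv.Perm (Fin n)) :
    weaklyStable ω σ ↔ weaklyStable ((fun i => ω.1 i ∘ σ), ω.2 ∘ σ) 1 := by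
  simp only [weaklyStable, wBlocks]
  constructor
  · intro h i j hji
    simpa using h i (σ j) (σ.injective.ne hji)
  · intro h i j hj
    simpa using h i (σ⁻¹ j) (by rwa [Equiv.Perm.one_apply, Ne, Equiv.Perm.inv_eq_iff_eq])

theorem prefMeasure_setOf_weaklyStable (n k₁ k₂ : ℕ) (σ : Equiv.Perm (Fin n)) :
    prefMeasure n k₁ k₂ {ω | weaklyStable ω σ} = prefMeasure n k₁ k₂ {ω | weaklyStable ω 1} := by
  have hT : MeasurePreserving (fun ω : PrefSpace n k₁ k₂ => ((fun i => ω.1 i ∘ σ), ω.2 ∘ σ))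
      (prefMeasure n k₁ k₂) (prefMeasure n k₁ k₂) :=
    (measurePreserving_pi _ _ fun _ => measurePreserving_comp_perm _ σ).prod
      (measurePreserving_comp_perm _ σ)
  rw [← hT.measure_preimage (measurableSet_weaklyStable n k₁ k₂ 1).nullMeasurableSet]
  exact congrArg _ (Set.ext fun ω => weaklyStable_iff_relabel ω σ)

theorem Sw_eq_sum_indicator (n k₁ k₂ : ℕ) (ω : PrefSpace n k₁ k₂) :
    (Sw n k₁ k₂ ω : ℝ) = ∑ σ : Equiv.Perm (Fin n), {ω | weaklyStable ω σ}.indicator 1 ω := by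
  classical
  rw [Sw, Nat.card_eq_fintype_card, Fintype.card_subtype, Finset.card_filter]
  push_cast
  simp [Set.indicator_apply]

theorem ESw_eq_factorial_mul (n k₁ k₂ : ℕ) :
    ESw n k₁ k₂ = n.factorial * (prefMeasure n k₁ k₂ {ω | weaklyStable ω 1}).toReal := by
  rw [ESw, integral_congr_ae (ae_of_all _ (Sw_eq_sum_indicator n k₁ k₂)),
    integral_finsetSum _ fun σ _ =>
      (integrable_const 1).indicator (measurableSet_weaklyStable n k₁ k₂ σ)]
  simp only [integral_indicator_one (measurableSet_weaklyStable n k₁ k₂ _), measureReal_def,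
    prefMeasure_setOf_weaklyStable, Finset.sum_const, Finset.card_univ, Fintype.card_perm,
    Fintype.card_fin, nsmul_eq_mul]

theorem expected_weakly_stable_integral_formula_general (n k₁ k₂ : ℕ) :
    (prefMeasure n k₁ k₂ {ω | weaklyStable ω (1 : Equiv.Perm (Fin n))}).toReal =
      (∫ x : Fin n → Fin k₁ → ℝ, ∫ y : Fin n → Fin k₂ → ℝ,
          ∏ i : Fin n, ∏ j ∈ Finset.univ.erase i,
            (1 - (∏ u, x i u) * ∏ v, y j v)
        ∂(Measure.pi fun _ : Fin n => cubeMeasure k₂)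
        ∂(Measure.pi fun _ : Fin n => cubeMeasure k₁)) ∧
    ESw n k₁ k₂ = (n.factorial : ℝ) *
      ∫ x : Fin n → Fin k₁ → ℝ, ∫ y : Fin n → Fin k₂ → ℝ,
          ∏ i : Fin n, ∏ j ∈ Finset.univ.erase i,
            (1 - (∏ u, x i u) * ∏ v, y j v)
        ∂(Measure.pi fun _ : Fin n => cubeMeasure k₂)
        ∂(Measure.pi fun _ : Fin n => cubeMeasure k₁) := by
  have h := toReal_prefMeasure_setOf_weaklyStable_one n k₁ k₂
  exact ⟨h, by rw [ESw_eq_factorial_mul, h]⟩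

/-- The probability that the identity permutation is weakly stable is given
by the integral formula, and consequently the expected number of weakly stable matchings is
`n!` times this integral. -/
theorem expected_weakly_stable_integral_formula (n k₁ k₂ : ℕ) (hn : 2 ≤ n)
    (hk₁ : 1 ≤ k₁) (hk₂ : 1 ≤ k₂) :
    (prefMeasure n k₁ k₂ {ω | weaklyStable ω (1 : Equiv.Perm (Fin n))}).toReal =
      (∫ x : Fin n → Fin k₁ → ℝ, ∫ y : Fin n → Fin k₂ → ℝ,
          ∏ i : Fin n, ∏ j ∈ Finset.univ.erase i,
            (1 - (∏ u, x i u) * ∏ v, y j v)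
        ∂(Measure.pi fun _ : Fin n => cubeMeasure k₂)
        ∂(Measure.pi fun _ : Fin n => cubeMeasure k₁)) ∧
    ESw n k₁ k₂ = (n.factorial : ℝ) *
      ∫ x : Fin n → Fin k₁ → ℝ, ∫ y : Fin n → Fin k₂ → ℝ,
          ∏ i : Fin n, ∏ j ∈ Finset.univ.erase i,
            (1 - (∏ u, x i u) * ∏ v, y j v)
        ∂(Measure.pi fun _ : Fin n => cubeMeasure k₂)
        ∂(Measure.pi fun _ : Fin n => cubeMeasure k₁) :=
  expected_weakly_stable_integral_formula_general n k₁ k₂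
end
end

section
/- For every integer k ≥ 2, ∫_0^1 e^{z/2} z^{−1} (log(1/(1−z)))^{k}/k! dz ≤ ∫_0^1 e^{z/2} z^{−1} (log(1/(1−z)))^{k−1}/(k−1)! dz; that is, the sequence ρ_k := e^{−1} ∫_0^1 e^{z/2} z^{−1} (log(1/(1−z)))^{k−1}/(k−1)! dz is nonincreasing in k for k ≥ 2 (and each such integral is finite). -/
/-!
Write `L z = log (1 / (1 - z))` and `w z = e^{z/2} / z`. The function `G = w · (1 - z) · L^{n+2}`
tends to `0` at both ends of `[0, 1]` (as `L z / z ≤ 1 + L z`, and `L^m = O((1 - z)^{-1/2})`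
near `1`; these two bounds also give the integrability of `w L^m`), and on `(0, 1)`
`G' = w' · (1 - z) L^{n+2} + w · ((n + 2) L^{n+1} - L^{n+2})`.
Since `w` is decreasing, integrating `G' ≤ w · ((n + 2) L^{n+1} - L^{n+2})` over `[0, 1]` gives
`∫ w L^{n+2} ≤ (n + 2) ∫ w L^{n+1}`, which is the claim after dividing by `(n + 2)!`.
-/

open MeasureTheory Set Filter Topology
open scoped Nat

noncomputable section

def rhoWeight (z : ℝ) : ℝ := Real.exp (z / 2) * z⁻¹

lemma log_one_div_one_sub_nonneg {z : ℝ} (h0 : 0 ≤ z) (h1 : z < 1) :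
    0 ≤ Real.log (1 / (1 - z)) :=
  Real.log_nonneg (by rw [le_div_iff₀ (by linarith)]; linarith)

lemma log_one_div_one_sub_le {z : ℝ} (h1 : z < 1) :
    Real.log (1 / (1 - z)) ≤ z * (1 + Real.log (1 / (1 - z))) := by
  have h := mul_le_mul_of_nonneg_left (Real.one_sub_inv_le_log_of_pos (sub_pos.2 h1))
    (sub_pos.2 h1).le
  have h' : (1 - z) * (1 - (1 - z)⁻¹) = -z := by
    field_simp [(sub_pos.2 h1).ne']
    ring
  rw [h'] at h
  rw [one_div, Real.log_inv]
  linarith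

lemma inv_mul_log_one_div_one_sub_le {z : ℝ} (h0 : 0 < z) (h1 : z < 1) :
    z⁻¹ * Real.log (1 / (1 - z)) ≤ 1 + Real.log (1 / (1 - z)) := by
  rw [inv_mul_le_iff₀ h0]
  exact log_one_div_one_sub_le h1

lemma log_one_div_one_sub_pow_le (n : ℕ) {z : ℝ} (h0 : 0 ≤ z) (h1 : z < 1) :
    Real.log (1 / (1 - z)) ^ n ≤ 2 ^ n * n ! * (1 - z) ^ (-(1 / 2) : ℝ) := by
  have hL := log_one_div_one_sub_nonneg h0 h1
  have hexp : Real.exp (Real.log (1 / (1 - z)) / 2) = (1 - z) ^ (-(1 / 2) : ℝ) := by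
    rw [Real.rpow_def_of_pos (sub_pos.2 h1), one_div, Real.log_inv]
    ring_nf
  have h := Real.pow_div_factorial_le_exp _ (div_nonneg hL zero_le_two) n
  rw [hexp, div_pow, div_div, div_le_iff₀ (by positivity)] at h
  linarith

lemma integrableOn_one_sub_rpow {r : ℝ} (hr : -1 < r) :
    IntegrableOn (fun z : ℝ => (1 - z) ^ r) (Ioo 0 1) := by
  have h :=
    ((intervalIntegral.intervalIntegrable_rpow' hr (a := 0) (b := 1)).comp_sub_left 1).symm
  simp only [sub_zero, sub_self] at h
  exact (intervalIntegrable_iff_integrableOn_Ioo_of_le zero_le_one).1 h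

lemma integrableOn_log_one_div_one_sub_pow (n : ℕ) :
    IntegrableOn (fun z : ℝ => Real.log (1 / (1 - z)) ^ n) (Ioo 0 1) := by
  refine ((integrableOn_one_sub_rpow (by norm_num : (-1 : ℝ) < -(1 / 2))).const_mul
    (2 ^ n * n !)).mono' (by fun_prop : Measurable _).aestronglyMeasurable
    ((ae_restrict_iff' measurableSet_Ioo).2 (ae_of_all _ ?_))
  rintro z ⟨h0, h1⟩
  rw [Real.norm_of_nonneg (pow_nonneg (log_one_div_one_sub_nonneg h0.le h1) n)]
  exact log_one_div_one_sub_pow_le n h0.le h1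

lemma integrableOn_rhoWeight_mul_log_pow_succ (n : ℕ) :
    IntegrableOn (fun z => rhoWeight z * Real.log (1 / (1 - z)) ^ (n + 1)) (Ioo 0 1) := by
  refine (((integrableOn_log_one_div_one_sub_pow n).add
    (integrableOn_log_one_div_one_sub_pow (n + 1))).const_mul (Real.exp (1 / 2))).mono'
    (by unfold rhoWeight; fun_prop : Measurable _).aestronglyMeasurable
    ((ae_restrict_iff' measurableSet_Ioo).2 (ae_of_all _ ?_))
  rintro z ⟨h0, h1⟩
  have hL := log_one_div_one_sub_nonneg h0.le h1
  have hexp : Real.exp (z / 2) ≤ Real.exp (1 / 2) := Real.exp_le_exp.2 (by linarith)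
  have hz := inv_mul_log_one_div_one_sub_le h0 h1
  rw [Real.norm_of_nonneg (by unfold rhoWeight; positivity)]
  calc rhoWeight z * Real.log (1 / (1 - z)) ^ (n + 1)
      = Real.exp (z / 2) * (z⁻¹ * Real.log (1 / (1 - z)) * Real.log (1 / (1 - z)) ^ n) := by
        unfold rhoWeight; ring
    _ ≤ Real.exp (1 / 2) * ((1 + Real.log (1 / (1 - z))) * Real.log (1 / (1 - z)) ^ n) := by
        gcongr
    _ = _ := by simp only [Pi.add_apply]; ring

lemma hasDerivAt_log_one_div_one_sub {x : ℝ} (hx : x < 1) :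
    HasDerivAt (fun z => Real.log (1 / (1 - z))) (1 - x)⁻¹ x := by
  have h := ((Real.hasDerivAt_log (sub_pos.2 hx).ne').comp x ((hasDerivAt_id x).const_sub 1)).neg
  simp only [one_div, Real.log_inv]
  exact h.congr_deriv (by ring)

lemma hasDerivAt_one_sub_mul_log_one_div_one_sub_pow (n : ℕ) {x : ℝ} (hx : x < 1) :
    HasDerivAt (fun z => (1 - z) * Real.log (1 / (1 - z)) ^ (n + 1))
      ((n + 1) * Real.log (1 / (1 - x)) ^ n - Real.log (1 / (1 - x)) ^ (n + 1)) x := by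
  have h := ((hasDerivAt_id x).const_sub 1).mul ((hasDerivAt_log_one_div_one_sub hx).pow (n + 1))
  refine h.congr_deriv ?_
  have : 1 - x ≠ 0 := (sub_pos.2 hx).ne'
  simp only [id, Pi.pow_apply, Nat.add_sub_cancel, Nat.cast_add, Nat.cast_one]
  field_simp
  ring

lemma hasDerivAt_rhoWeight {x : ℝ} (hx : x ≠ 0) :
    HasDerivAt rhoWeight (Real.exp (x / 2) * ((x - 2) / (2 * x ^ 2))) x := by
  have h := (((hasDerivAt_id x).div_const 2).exp).mul (hasDerivAt_inv hx)
  refine h.congr_deriv ?_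
  simp only [id]
  field_simp
  ring

lemma tendsto_inv_mul_log_one_div_one_sub_pow (n : ℕ) :
    Tendsto (fun z : ℝ => z⁻¹ * Real.log (1 / (1 - z)) ^ (n + 2)) (𝓝[>] 0) (𝓝 0) := by
  have hbound : ContinuousAt
      (fun z : ℝ => (1 + Real.log (1 / (1 - z))) * Real.log (1 / (1 - z)) ^ (n + 1)) 0 := by
    fun_prop (disch := norm_num)
  have hlim : Tendsto
      (fun z : ℝ => (1 + Real.log (1 / (1 - z))) * Real.log (1 / (1 - z)) ^ (n + 1))
      (𝓝[>] 0) (𝓝 0) := by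
    simpa using hbound.tendsto.mono_left nhdsWithin_le_nhds
  refine squeeze_zero' ?_ ?_ hlim
  · filter_upwards [Ioo_mem_nhdsGT zero_lt_one] with z ⟨h0, h1⟩
    have := log_one_div_one_sub_nonneg h0.le h1
    positivity
  · filter_upwards [Ioo_mem_nhdsGT zero_lt_one] with z ⟨h0, h1⟩
    rw [pow_succ', ← mul_assoc]
    exact mul_le_mul_of_nonneg_right (inv_mul_log_one_div_one_sub_le h0 h1)
      (pow_nonneg (log_one_div_one_sub_nonneg h0.le h1) _)

lemma tendsto_one_sub_mul_log_one_div_one_sub_pow (n : ℕ) :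
    Tendsto (fun z : ℝ => (1 - z) * Real.log (1 / (1 - z)) ^ n) (𝓝[<] 1) (𝓝 0) := by
  have hbound : ContinuousAt (fun z : ℝ => 2 ^ n * n ! * (1 - z) ^ (1 / 2 : ℝ)) 1 := by
    fun_prop (disch := norm_num)
  have hlim : Tendsto (fun z : ℝ => 2 ^ n * n ! * (1 - z) ^ (1 / 2 : ℝ)) (𝓝[<] 1) (𝓝 0) := by
    simpa using hbound.tendsto.mono_left nhdsWithin_le_nhds
  refine squeeze_zero' ?_ ?_ hlim
  · filter_upwards [Ioo_mem_nhdsLT zero_lt_one] with z ⟨h0, h1⟩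
    have := log_one_div_one_sub_nonneg h0.le h1
    have : 0 < 1 - z := sub_pos.2 h1
    positivity
  · filter_upwards [Ioo_mem_nhdsLT zero_lt_one] with z ⟨h0, h1⟩
    have h1z : 0 < 1 - z := sub_pos.2 h1
    calc (1 - z) * Real.log (1 / (1 - z)) ^ n
        ≤ (1 - z) * (2 ^ n * n ! * (1 - z) ^ (-(1 / 2) : ℝ)) :=
          mul_le_mul_of_nonneg_left (log_one_div_one_sub_pow_le n h0.le h1) h1z.le
      _ = 2 ^ n * n ! * ((1 - z) ^ (1 : ℝ) * (1 - z) ^ (-(1 / 2) : ℝ)) := by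
          rw [Real.rpow_one]; ring
      _ = 2 ^ n * n ! * (1 - z) ^ (1 / 2 : ℝ) := by
          rw [← Real.rpow_add h1z]; norm_num

lemma continuousOn_rhoWeight_mul_one_sub_mul_log_pow (n : ℕ) :
    ContinuousOn (fun z => rhoWeight z * ((1 - z) * Real.log (1 / (1 - z)) ^ (n + 2)))
      (Icc 0 1) := by
  rintro x ⟨hx0, hx1⟩
  rcases hx0.eq_or_lt with rfl | hx0
  · have hc : ContinuousAt (fun z : ℝ => Real.exp (z / 2) * (1 - z)) 0 := by fun_prop
    have h := (hc.tendsto.mono_left nhdsWithin_le_nhds).mul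
      (tendsto_inv_mul_log_one_div_one_sub_pow n)
    refine (continuousWithinAt_Ioi_iff_Ici.1 ?_).mono Icc_subset_Ici_self
    simp only [ContinuousWithinAt, sub_zero, div_one, Real.log_one, ne_eq, add_eq_zero,
      OfNat.ofNat_ne_zero, and_false, not_false_eq_true, zero_pow, mul_zero]
    convert h using 2 with z
    · unfold rhoWeight; ring
    · simp
  rcases hx1.eq_or_lt with rfl | hx1
  · have hc : ContinuousAt rhoWeight 1 := by unfold rhoWeight; fun_prop (disch := norm_num)
    have h := (hc.tendsto.mono_left nhdsWithin_le_nhds).mul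
      (tendsto_one_sub_mul_log_one_div_one_sub_pow (n + 2))
    refine (continuousWithinAt_Iio_iff_Iic.1 ?_).mono Icc_subset_Iic_self
    simpa [ContinuousWithinAt] using h
  · have hc : ContinuousAt rhoWeight x := by unfold rhoWeight; fun_prop (disch := exact hx0.ne')
    have hH := (hasDerivAt_one_sub_mul_log_one_div_one_sub_pow (n + 1) hx1).continuousAt
    exact (hc.mul hH).continuousWithinAt

theorem integral_rhoWeight_mul_log_pow_le (n : ℕ) :
    ∫ z in Ioo 0 1, rhoWeight z * Real.log (1 / (1 - z)) ^ (n + 2) ≤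
      (n + 2) * ∫ z in Ioo 0 1, rhoWeight z * Real.log (1 / (1 - z)) ^ (n + 1) := by
  have hint₁ := integrableOn_rhoWeight_mul_log_pow_succ n
  have hint₂ := integrableOn_rhoWeight_mul_log_pow_succ (n + 1)
  have hφ : IntegrableOn (fun z => (n + 2) * (rhoWeight z * Real.log (1 / (1 - z)) ^ (n + 1)) -
      rhoWeight z * Real.log (1 / (1 - z)) ^ (n + 2)) (Icc 0 1) :=
    (integrableOn_Icc_iff_integrableOn_Ioo).2 ((hint₁.const_mul _).sub hint₂)
  have key := intervalIntegral.sub_le_integral_of_hasDeriv_right_of_le zero_le_one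
    (continuousOn_rhoWeight_mul_one_sub_mul_log_pow n)
    (fun x hx => ((hasDerivAt_rhoWeight hx.1.ne').mul
      (hasDerivAt_one_sub_mul_log_one_div_one_sub_pow (n + 1) hx.2)).hasDerivWithinAt) hφ ?_
  · simp only [sub_self, zero_mul, mul_zero, sub_zero, div_one, Real.log_one, ne_eq, add_eq_zero,
      OfNat.ofNat_ne_zero, and_false, not_false_eq_true, zero_pow] at key
    rw [intervalIntegral.integral_of_le zero_le_one, integral_Ioc_eq_integral_Ioo,
      integral_sub (hint₁.const_mul _) hint₂, integral_const_mul] at key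
    linarith
  · rintro x ⟨h0, h1⟩
    have hweight_deriv : Real.exp (x / 2) * ((x - 2) / (2 * x ^ 2)) ≤ 0 :=
      mul_nonpos_of_nonneg_of_nonpos (Real.exp_pos _).le
        (div_nonpos_of_nonpos_of_nonneg (by linarith) (by positivity))
    have hH : 0 ≤ (1 - x) * Real.log (1 / (1 - x)) ^ (n + 2) :=
      mul_nonneg (sub_pos.2 h1).le (pow_nonneg (log_one_div_one_sub_nonneg h0.le h1) _)
    have := mul_nonpos_of_nonpos_of_nonneg hweight_deriv hH
    push_cast
    linarith

/-- For each integer `k ≥ 2`, the integral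
`∫_0^1 e^{z/2} z^{−1} (log(1/(1−z)))^{k}/k! dz` is finite, as is the corresponding integral
with `k` replaced by `k−1`, and the former is at most the latter; i.e. the sequence
`ρ_k = e^{−1} ∫_0^1 e^{z/2} z^{−1} (log(1/(1−z)))^{k−1}/(k−1)! dz` is nonincreasing. -/
theorem rho_integrals_antitone (k : ℕ) (hk : 2 ≤ k) :
    IntegrableOn
      (fun z : ℝ =>
        Real.exp (z / 2) * z⁻¹ * (Real.log (1 / (1 - z))) ^ (k - 1) /
          (Nat.factorial (k - 1))) (Ioo (0:ℝ) 1) volume ∧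
    IntegrableOn
      (fun z : ℝ =>
        Real.exp (z / 2) * z⁻¹ * (Real.log (1 / (1 - z))) ^ k /
          (Nat.factorial k)) (Ioo (0:ℝ) 1) volume ∧
    (∫ z in Ioo (0:ℝ) 1,
        Real.exp (z / 2) * z⁻¹ * (Real.log (1 / (1 - z))) ^ k / (Nat.factorial k)) ≤
      ∫ z in Ioo (0:ℝ) 1,
        Real.exp (z / 2) * z⁻¹ * (Real.log (1 / (1 - z))) ^ (k - 1) /
          (Nat.factorial (k - 1)) := by
  obtain ⟨n, rfl⟩ : ∃ n, k = n + 2 := ⟨k - 2, by omega⟩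
  have hrec := integral_rhoWeight_mul_log_pow_le n
  unfold rhoWeight at hrec
  refine ⟨(integrableOn_rhoWeight_mul_log_pow_succ n).div_const _,
    (integrableOn_rhoWeight_mul_log_pow_succ (n + 1)).div_const _, ?_⟩
  rw [integral_div, integral_div, div_le_div_iff₀ (by positivity) (by positivity),
    Nat.factorial_succ (n + 1)]
  push_cast
  calc _ ≤ ((n + 2) * ∫ z in Ioo (0:ℝ) 1, Real.exp (z / 2) * z⁻¹ *
          Real.log (1 / (1 - z)) ^ (n + 1)) * (n + 1)! :=
        mul_le_mul_of_nonneg_right hrec (by positivity)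
    _ = _ := by ring
end
end

section
/- Suppose min(k₁,k₂) = 1 and k := max(k₁,k₂) ≥ 2, and set r_k := (e²·(k−1)!)^{−1}. Then for every ε ∈ (0, r_k) there exists N such that for all n ≥ N, E[S_{n,sup}] ≥ (r_k − ε)^n. -/
open MeasureTheory Set

noncomputable section

/-!
If the preferences on one side are one-dimensional, `σ` is super-stable as soon as every
agent on that side strictly prefers its partner to all other agents. With the threshold `1/n`,
the event that in each row the partner's entry lies below `1/n` and all other entries above it
has probability `(n⁻¹ (1 - n⁻¹)^(n-1))^n ≥ (e n)⁻ⁿ`. Summing over the `n! ≥ (n/e)ⁿ`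
permutations gives `E[S_{n,sup}] ≥ e^{-2n} ≥ r_kⁿ`.
-/

open scoped Nat

instance : IsProbabilityMeasure (volume.restrict (Icc (0:ℝ) 1)) :=
  ⟨by simp⟩

instance (k : ℕ) : IsProbabilityMeasure (cubeMeasure k) := by
  unfold cubeMeasure; infer_instance

instance (n k₁ k₂ : ℕ) : IsProbabilityMeasure (prefMeasure n k₁ k₂) := by
  unfold prefMeasure; infer_instance

lemma measurableSet_superStable {n k₁ k₂ : ℕ} (σ : Equiv.Perm (Fin n)) :
    MeasurableSet {ω : PrefSpace n k₁ k₂ | superStable ω σ} :=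
  Measurable.setOf (by unfold superStable supBlocks vlt; fun_prop)

lemma Ssup_eq_sum_indicator (n k₁ k₂ : ℕ) (ω : PrefSpace n k₁ k₂) :
    (Ssup n k₁ k₂ ω : ℝ) = ∑ σ, {ω' | superStable ω' σ}.indicator 1 ω := by
  classical
  rw [Ssup, Nat.card_eq_fintype_card, Fintype.card_subtype, Finset.card_filter]
  push_cast
  simp [Set.indicator_apply]

lemma ESsup_eq_sum_measureReal (n k₁ k₂ : ℕ) :
    ESsup n k₁ k₂ = ∑ σ, (prefMeasure n k₁ k₂).real {ω | superStable ω σ} := by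
  simp_rw [ESsup, Ssup_eq_sum_indicator]
  rw [integral_finsetSum _ fun σ _ => (integrable_const 1).indicator (measurableSet_superStable σ)]
  simp_rw [integral_indicator_one (measurableSet_superStable _)]

lemma factorial_mul_le_ESsup {n k₁ k₂ : ℕ} {p : ℝ}
    (hp : ∀ σ, p ≤ (prefMeasure n k₁ k₂).real {ω | superStable ω σ}) :
    n ! * p ≤ ESsup n k₁ k₂ := by
  rw [ESsup_eq_sum_measureReal]
  calc (n ! : ℝ) * p = ∑ _σ : Equiv.Perm (Fin n), p := by simp [Fintype.card_perm]
    _ ≤ _ := Finset.sum_le_sum fun σ _ => hp σ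

lemma volume_restrict_Icc_Ioo {l u a b : ℝ} (hla : l ≤ a) (hbu : b ≤ u) :
    volume.restrict (Icc l u) (Ioo a b) = ENNReal.ofReal (b - a) := by
  rw [Measure.restrict_eq_self _ (Ioo_subset_Icc_self.trans (Icc_subset_Icc hla hbu)),
    Real.volume_Ioo]

lemma prod_ite_eq_mul_pow {ι M : Type*} [Fintype ι] [DecidableEq ι] [CommMonoid M]
    (a : ι) (u v : M) :
    ∏ b, (if b = a then u else v) = u * v ^ (Fintype.card ι - 1) := by
  simp [Finset.prod_ite, Finset.filter_eq', Finset.filter_ne']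

def thresholdBox {n k : ℕ} (c : ℝ) (f : Fin n → Fin n) : Set (Fin n → Fin n → Fin k → ℝ) :=
  univ.pi fun a => univ.pi fun b => univ.pi fun _ => if b = f a then Ioo 0 c else Ioo c 1

lemma measurableSet_thresholdBox {n k : ℕ} (c : ℝ) (f : Fin n → Fin n) :
    MeasurableSet (thresholdBox (k := k) c f) :=
  .univ_pi fun _ => .univ_pi fun _ => .univ_pi fun _ => by split_ifs <;> exact measurableSet_Ioo

lemma vlt_of_mem_thresholdBox {n k : ℕ} {c : ℝ} {f : Fin n → Fin n}
    {x : Fin n → Fin n → Fin k → ℝ} (hx : x ∈ thresholdBox c f) {a b : Fin n} (hb : b ≠ f a) :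
    vlt (x a (f a)) (x a b) := fun t => by
  have hlow := hx a trivial (f a) trivial t trivial
  have hhigh := hx a trivial b trivial t trivial
  simp only [if_neg hb] at hlow hhigh
  exact hlow.2.trans hhigh.1

lemma measureReal_thresholdBox {n k : ℕ} {c : ℝ} (hc₀ : 0 ≤ c) (hc₁ : c ≤ 1)
    (f : Fin n → Fin n) :
    (Measure.pi fun _ : Fin n => Measure.pi fun _ : Fin n => cubeMeasure k).real
      (thresholdBox c f) = (c * (1 - c) ^ (n - 1)) ^ (n * k) := by
  have hlen : ∀ a b : Fin n, volume.restrict (Icc (0:ℝ) 1)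
      (if b = f a then Ioo 0 c else Ioo c 1) = ENNReal.ofReal (if b = f a then c else 1 - c) := by
    intro a b
    split_ifs
    · simpa using volume_restrict_Icc_Ioo (le_refl (0 : ℝ)) hc₁
    · exact volume_restrict_Icc_Ioo hc₀ le_rfl
  have hnonneg : ∀ a b : Fin n, 0 ≤ if b = f a then c else 1 - c := fun a b => by
    split_ifs <;> linarith
  simp only [measureReal_def, thresholdBox, cubeMeasure, Measure.pi_pi, hlen,
    Finset.prod_const, Finset.card_univ, Fintype.card_fin, Finset.prod_pow]
  simp only [ENNReal.toReal_pow, ENNReal.toReal_prod, ENNReal.toReal_ofReal (hnonneg _ _),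
    prod_ite_eq_mul_pow, Finset.prod_const, Finset.card_univ, Fintype.card_fin, pow_mul]

lemma superStable_of_forall_vlt_fst {n k₁ k₂ : ℕ} {ω : PrefSpace n k₁ k₂} {σ : Equiv.Perm (Fin n)}
    (h : ∀ i j, j ≠ σ i → vlt (ω.1 i (σ i)) (ω.1 i j)) : superStable ω σ :=
  fun i j hj hblock => hblock.1 (h i j hj)

lemma superStable_of_forall_vlt_snd {n k₁ k₂ : ℕ} {ω : PrefSpace n k₁ k₂} {σ : Equiv.Perm (Fin n)}
    (h : ∀ j i, i ≠ σ⁻¹ j → vlt (ω.2 j (σ⁻¹ j)) (ω.2 j i)) : superStable ω σ :=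
  fun i j hj hblock => hblock.2 (h j i fun hi => hj (by simp [hi]))

lemma le_measureReal_superStable {n k₁ k₂ : ℕ} (hk : k₁ = 1 ∨ k₂ = 1) (σ : Equiv.Perm (Fin n)) :
    ((n : ℝ)⁻¹ * (1 - (n : ℝ)⁻¹) ^ (n - 1)) ^ n ≤
      (prefMeasure n k₁ k₂).real {ω | superStable ω σ} := by
  have hc₀ : (0 : ℝ) ≤ (n : ℝ)⁻¹ := by positivity
  have hc₁ : (n : ℝ)⁻¹ ≤ 1 := Nat.cast_inv_le_one n
  rcases hk with rfl | rfl
  · calc _ = (prefMeasure n 1 k₂).real (Prod.fst ⁻¹' thresholdBox (n : ℝ)⁻¹ σ) := by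
          rw [prefMeasure, measurePreserving_fst.measureReal_preimage
            (measurableSet_thresholdBox _ _).nullMeasurableSet,
            measureReal_thresholdBox hc₀ hc₁, mul_one]
      _ ≤ _ := measureReal_mono fun ω hω =>
          superStable_of_forall_vlt_fst fun _ _ hj => vlt_of_mem_thresholdBox hω hj
  · calc _ = (prefMeasure n k₁ 1).real (Prod.snd ⁻¹' thresholdBox (n : ℝ)⁻¹ ⇑σ⁻¹) := by
          rw [prefMeasure, measurePreserving_snd.measureReal_preimage
            (measurableSet_thresholdBox _ _).nullMeasurableSet,
            measureReal_thresholdBox hc₀ hc₁, mul_one]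
      _ ≤ _ := measureReal_mono fun ω hω =>
          superStable_of_forall_vlt_snd fun _ _ hi => vlt_of_mem_thresholdBox hω hi

lemma inv_exp_one_le_one_sub_inv_pow_pred (n : ℕ) :
    (Real.exp 1)⁻¹ ≤ (1 - (n : ℝ)⁻¹) ^ (n - 1) := by
  rcases Nat.lt_or_ge n 2 with hn | hn
  · rw [Nat.sub_eq_zero_of_le (by omega), pow_zero]
    exact inv_le_one_of_one_le₀ (Real.one_le_exp zero_le_one)
  obtain ⟨m, rfl⟩ : ∃ m, n = m + 1 := ⟨n - 1, by omega⟩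
  have hm : (m : ℝ) ≠ 0 := Nat.cast_ne_zero.mpr (by omega)
  have hbase : 1 - ((m + 1 : ℕ) : ℝ)⁻¹ = (1 + (m : ℝ)⁻¹)⁻¹ := by
    push_cast; field_simp; ring
  rw [hbase, Nat.add_sub_cancel, inv_pow]
  exact inv_anti₀ (by positivity) Real.one_add_inv_pow_le_exp

lemma inv_exp_one_pow_le_factorial_div_pow (n : ℕ) :
    (Real.exp 1)⁻¹ ^ n ≤ n ! / (n : ℝ) ^ n := by
  have h := Real.pow_div_factorial_le_exp n (Nat.cast_nonneg n) n
  have hpos : (0 : ℝ) < n ^ n := by exact_mod_cast Nat.pow_self_pos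
  rw [← Real.exp_one_pow] at h
  rw [inv_pow, ← inv_div]
  exact inv_anti₀ (by positivity) h

lemma inv_exp_two_pow_le (n : ℕ) :
    (Real.exp 1 ^ 2)⁻¹ ^ n ≤ n ! * ((n : ℝ)⁻¹ * (1 - (n : ℝ)⁻¹) ^ (n - 1)) ^ n := by
  calc (Real.exp 1 ^ 2)⁻¹ ^ n = (Real.exp 1)⁻¹ ^ n * (Real.exp 1)⁻¹ ^ n := by
        rw [← mul_pow, ← mul_inv, ← sq]
    _ ≤ n ! / (n : ℝ) ^ n * ((1 - (n : ℝ)⁻¹) ^ (n - 1)) ^ n := by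
        gcongr
        · exact inv_exp_one_pow_le_factorial_div_pow n
        · exact inv_exp_one_le_one_sub_inv_pow_pred n
    _ = _ := by rw [mul_pow, inv_pow, div_eq_mul_inv, mul_assoc]

theorem super_stable_lower_bound_one_side_linear_general (k₁ k₂ : ℕ)
    (hmin : min k₁ k₂ = 1) (ε : ℝ) (hε : 0 < ε)
    (hε' : ε < (Real.exp 1 ^ 2 * (Nat.factorial (max k₁ k₂ - 1) : ℝ))⁻¹) :
    ∃ N : ℕ, ∀ n : ℕ, N ≤ n →
      ((Real.exp 1 ^ 2 * (Nat.factorial (max k₁ k₂ - 1) : ℝ))⁻¹ - ε) ^ n ≤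
        ESsup n k₁ k₂ := by
  have hr : (Real.exp 1 ^ 2 * (Nat.factorial (max k₁ k₂ - 1) : ℝ))⁻¹ - ε ≤ (Real.exp 1 ^ 2)⁻¹ := by
    have : (Real.exp 1 ^ 2 * (Nat.factorial (max k₁ k₂ - 1) : ℝ))⁻¹ ≤ (Real.exp 1 ^ 2)⁻¹ :=
      inv_anti₀ (by positivity)
        (le_mul_of_one_le_right (by positivity) (Nat.one_le_cast.mpr (Nat.factorial_pos _)))
    linarith
  refine ⟨0, fun n _ => ?_⟩
  calc _ ≤ (Real.exp 1 ^ 2)⁻¹ ^ n := pow_le_pow_left₀ (by linarith) hr n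
    _ ≤ n ! * ((n : ℝ)⁻¹ * (1 - (n : ℝ)⁻¹) ^ (n - 1)) ^ n := inv_exp_two_pow_le n
    _ ≤ ESsup n k₁ k₂ := factorial_mul_le_ESsup (le_measureReal_superStable (by omega))

/-- If `min(k₁,k₂) = 1` and `k := max(k₁,k₂) ≥ 2`, with
`r_k := (e²·(k−1)!)⁻¹`, then for every `ε ∈ (0, r_k)` and all large `n`,
`E[S_{n,sup}] ≥ (r_k − ε)^n`. -/
theorem super_stable_lower_bound_one_side_linear (k₁ k₂ : ℕ)
    (hmin : min k₁ k₂ = 1) (hmax : 2 ≤ max k₁ k₂) (ε : ℝ) (hε : 0 < ε)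
    (hε' : ε < (Real.exp 1 ^ 2 * (Nat.factorial (max k₁ k₂ - 1) : ℝ))⁻¹) :
    ∃ N : ℕ, ∀ n : ℕ, N ≤ n →
      ((Real.exp 1 ^ 2 * (Nat.factorial (max k₁ k₂ - 1) : ℝ))⁻¹ - ε) ^ n ≤
        ESsup n k₁ k₂ :=
  super_stable_lower_bound_one_side_linear_general k₁ k₂ hmin ε hε hε'
end
end

section
/- Let α > 1 and let α̂ ∈ (0,1) be the unique number in (0,1) satisfying α̂·e^{−α̂} = α·e^{−α}; set β := 1 − α̂/α ∈ (0,1). Then for every η ∈ [0, β], (1 − η)·e^{αη} ≥ 1; equivalently, 1 − η ≥ e^{−αη} for all η ∈ [0, β]. -/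
/-- Let `α > 1` and let `α̂ ∈ (0,1)` satisfy `α̂·e^{−α̂} = α·e^{−α}`;
set `β := 1 − α̂/α`. Then for every `η ∈ [0, β]`, `(1 − η)·e^{αη} ≥ 1`; equivalently,
`1 − η ≥ e^{−αη}`. -/
theorem one_sub_ge_exp_neg_on_beta (α αh : ℝ) (hα : 1 < α) (hαh : αh ∈ Set.Ioo (0:ℝ) 1)
    (heq : αh * Real.exp (-αh) = α * Real.exp (-α)) (η : ℝ)
    (hη : η ∈ Set.Icc (0:ℝ) (1 - αh / α)) :
    1 ≤ (1 - η) * Real.exp (α * η) ∧ Real.exp (-(α * η)) ≤ 1 - η := by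
  obtain ⟨h0, h1⟩ := hαh
  obtain ⟨hη0, hηβ⟩ := hη
  have hα0 : (0:ℝ) < α := lt_trans one_pos hα
  have hβlt1 : 1 - αh / α < 1 := by
    have : 0 < αh / α := div_pos h0 hα0
    linarith
  have hβ0 : 0 ≤ 1 - αh / α := le_trans hη0 hηβ
  have hη1 : η < 1 := lt_of_le_of_lt hηβ hβlt1
  set g : ℝ → ℝ := fun x => Real.log (1 - x) + α * x with hg
  have hconc : ConcaveOn ℝ (Set.Icc (0:ℝ) (1 - αh / α)) g := by
    refine ⟨convex_Icc _ _, ?_⟩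
    intro x hx y hy a b ha hb hab
    have hx1 : (0:ℝ) < 1 - x := by
      have := hx.2; linarith
    have hy1 : (0:ℝ) < 1 - y := by
      have := hy.2; linarith
    have hlog := (strictConcaveOn_log_Ioi.concaveOn).2
      (Set.mem_Ioi.mpr hx1) (Set.mem_Ioi.mpr hy1) ha hb hab
    simp only [smul_eq_mul] at hlog ⊢
    have harg : a * (1 - x) + b * (1 - y) = 1 - (a * x + b * y) := by
      have : a + b = 1 := hab
      ring_nf
      linarith
    rw [harg] at hlog
    simp only [hg]
    calc a * (Real.log (1 - x) + α * x) + b * (Real.log (1 - y) + α * y)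
        = (a * Real.log (1 - x) + b * Real.log (1 - y)) + α * (a * x + b * y) := by ring
      _ ≤ Real.log (1 - (a * x + b * y)) + α * (a * x + b * y) := by linarith
  have hg0 : g 0 = 0 := by simp [hg]
  have hgβ : g (1 - αh / α) = 0 := by
    have hlogeq : Real.log αh - αh = Real.log α - α := by
      have := congrArg Real.log heq
      rwa [Real.log_mul (ne_of_gt h0) (Real.exp_ne_zero _),
        Real.log_mul (ne_of_gt hα0) (Real.exp_ne_zero _),
        Real.log_exp, Real.log_exp] at this
    have h1ab : 1 - (1 - αh / α) = αh / α := by ring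
    simp only [hg, h1ab]
    rw [Real.log_div (ne_of_gt h0) (ne_of_gt hα0)]
    have : α * (1 - αh / α) = α - αh := by
      field_simp
    rw [this]
    linarith
  have hmem : η ∈ segment ℝ (0:ℝ) (1 - αh / α) := by
    rw [segment_eq_Icc hβ0]
    exact ⟨hη0, hηβ⟩
  have hge : (0:ℝ) ≤ g η := by
    have := hconc.ge_on_segment (Set.left_mem_Icc.mpr hβ0)
      (Set.right_mem_Icc.mpr hβ0) hmem
    rw [hg0, hgβ] at this
    simpa using this
  have hlogη : -(α * η) ≤ Real.log (1 - η) := by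
    simp only [hg] at hge; linarith
  have h2 : Real.exp (-(α * η)) ≤ 1 - η := by
    calc Real.exp (-(α * η)) ≤ Real.exp (Real.log (1 - η)) := Real.exp_le_exp.mpr hlogη
      _ = 1 - η := Real.exp_log (by linarith)
  refine ⟨?_, h2⟩
  have hpos : 0 < Real.exp (α * η) := Real.exp_pos _
  have := mul_le_mul_of_nonneg_right h2 (le_of_lt hpos)
  rwa [← Real.exp_add, neg_add_cancel, Real.exp_zero] at this
end

section
/- For every integer k ≥ 1, lim_{n→∞} n·(log n)^{−(k−1)} ∫_0^1 e^{−nz} (log(1/z))^{k−1} dz = 1; that is, ∫_0^1 e^{−nz} (log(1/z))^{k−1} dz is asymptotic to (log n)^{k−1}/n as n → ∞. -/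
open MeasureTheory Set Filter


lemma aux_bound_integrable (m : ℕ) :
    IntegrableOn (fun t : ℝ => Real.exp (-t) * (1 + |Real.log t|) ^ m) (Ioi (0:ℝ)) := by
  have hmeas : Measurable fun t : ℝ => Real.exp (-t) * (1 + |Real.log t|) ^ m :=
    (Real.measurable_exp.comp measurable_neg).mul
      ((Real.measurable_log.abs.const_add 1).pow_const m)
  rw [← Ioc_union_Ioi_eq_Ioi (zero_le_one : (0:ℝ) ≤ 1), integrableOn_union]
  constructor
  · set ε : ℝ := 1 / (2 * (m + 1)) with hεdef
    have hε0 : 0 < ε := by positivity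
    have hεm : ε * m < 1 := by
      rw [hεdef, div_mul_eq_mul_div, div_lt_one (by positivity)]
      push_cast; nlinarith
    have hexp : (-1:ℝ) < -(ε * m) := by linarith
    have h1 : IntegrableOn (fun t : ℝ => t ^ (-(ε * m))) (Ioc (0:ℝ) 1) := by
      have := intervalIntegral.intervalIntegrable_rpow' (a := 0) (b := 1) hexp
      rwa [intervalIntegrable_iff_integrableOn_Ioc_of_le zero_le_one] at this
    refine Integrable.mono ((h1.const_mul ((1 + 1/ε) ^ m)))
      hmeas.aestronglyMeasurable ?_
    filter_upwards [ae_restrict_mem measurableSet_Ioc] with t ht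
    obtain ⟨ht0, ht1⟩ := ht
    have hrn : (0:ℝ) ≤ t ^ (-ε) := Real.rpow_nonneg ht0.le _
    have hone : 1 ≤ t ^ (-ε) :=
      Real.one_le_rpow_of_pos_of_le_one_of_nonpos ht0 ht1 (by linarith)
    have hlog : |Real.log t| ≤ t ^ (-ε) / ε := by
      rw [abs_of_nonpos (Real.log_nonpos ht0.le ht1), ← Real.log_inv]
      have := Real.log_le_rpow_div (inv_nonneg.mpr ht0.le) hε0
      rwa [Real.inv_rpow ht0.le, ← Real.rpow_neg ht0.le] at this
    have hsum : 1 + |Real.log t| ≤ (1 + 1/ε) * t ^ (-ε) := by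
      have : (1 + 1/ε) * t ^ (-ε) = t ^ (-ε) + t ^ (-ε) / ε := by
        field_simp
      rw [this]; exact add_le_add hone hlog
    have hpow : (1 + |Real.log t|) ^ m ≤ (1 + 1/ε) ^ m * t ^ (-(ε * m)) := by
      calc (1 + |Real.log t|) ^ m ≤ ((1 + 1/ε) * t ^ (-ε)) ^ m :=
            pow_le_pow_left₀ (by positivity) hsum m
        _ = (1 + 1/ε) ^ m * t ^ (-(ε * m)) := by
            rw [mul_pow, ← Real.rpow_natCast (t ^ (-ε)) m, ← Real.rpow_mul ht0.le]
            ring_nf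
    rw [Real.norm_eq_abs, Real.norm_eq_abs,
      abs_of_nonneg (mul_nonneg (Real.exp_nonneg _) (pow_nonneg (by positivity) m)),
      abs_of_nonneg (mul_nonneg (by positivity) (Real.rpow_nonneg ht0.le _))]
    calc Real.exp (-t) * (1 + |Real.log t|) ^ m
        ≤ 1 * ((1 + 1/ε) ^ m * t ^ (-(ε * (m:ℕ)))) := by
          apply mul_le_mul _ hpow (by positivity) zero_le_one
          exact Real.exp_le_one_iff.mpr (by linarith)
      _ = (1 + 1/ε) ^ m * t ^ (-(ε * (m:ℕ))) := one_mul _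
  · have hΓ := Real.GammaIntegral_convergent (s := (m:ℝ)+1) (by positivity)
    have hΓ1 : IntegrableOn (fun x : ℝ => Real.exp (-x) * x ^ ((m:ℝ)+1-1)) (Ioi 1) :=
      hΓ.mono_set (Ioi_subset_Ioi zero_le_one)
    refine Integrable.mono hΓ1 hmeas.aestronglyMeasurable ?_
    filter_upwards [ae_restrict_mem measurableSet_Ioi] with t ht
    have ht1 : (1:ℝ) ≤ t := le_of_lt ht
    have ht0 : (0:ℝ) < t := by linarith
    have hlg : 1 + |Real.log t| ≤ t := by
      rw [abs_of_nonneg (Real.log_nonneg ht1)]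
      have := Real.log_le_sub_one_of_pos ht0
      linarith
    have hrw : t ^ ((m:ℝ)+1-1) = t ^ m := by
      rw [add_sub_cancel_right, Real.rpow_natCast]
    rw [Real.norm_eq_abs, Real.norm_eq_abs, hrw,
      abs_of_nonneg (mul_nonneg (Real.exp_nonneg _) (pow_nonneg (by positivity) m)),
      abs_of_nonneg (mul_nonneg (Real.exp_nonneg _) (pow_nonneg ht0.le m))]
    exact mul_le_mul_of_nonneg_left (pow_le_pow_left₀ (by positivity) hlg m)
      (Real.exp_nonneg _)

/-- For every integer `k ≥ 1`,
`∫_0^1 e^{−nz} (log(1/z))^{k−1} dz` is asymptotic to `(log n)^{k−1}/n` as `n → ∞`, i.e.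
`n·(log n)^{−(k−1)}·∫_0^1 e^{−nz} (log(1/z))^{k−1} dz → 1`. -/
theorem laplace_log_power_asymptotics (k : ℕ) (hk : 1 ≤ k) :
    Tendsto (fun n : ℕ =>
        (n : ℝ) / (Real.log n) ^ (k - 1) *
          ∫ z in Ioo (0:ℝ) 1, Real.exp (-(n : ℝ) * z) * (Real.log (1 / z)) ^ (k - 1))
      atTop (nhds 1) := by
  set m := k - 1 with hm
  set F : ℕ → ℝ → ℝ := fun n t => (Ioo (0:ℝ) (n:ℝ)).indicator
      (fun t => Real.exp (-t) * ((Real.log n - Real.log t) / Real.log n) ^ m) t with hF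
  have hmeasF : ∀ n : ℕ, Measurable fun t : ℝ =>
      Real.exp (-t) * ((Real.log (n:ℝ) - Real.log t) / Real.log (n:ℝ)) ^ m := fun n =>
    (Real.measurable_exp.comp measurable_neg).mul
      (((Real.measurable_log.const_sub _).div_const _).pow_const m)
  have hlog_top : Tendsto (fun n : ℕ => Real.log n) atTop atTop :=
    Real.tendsto_log_atTop.comp tendsto_natCast_atTop_atTop
  have key : Tendsto (fun n : ℕ => ∫ t in Ioi (0:ℝ), F n t) atTop (nhds 1) := by
    rw [← integral_exp_neg_Ioi_zero]
    apply tendsto_integral_filter_of_dominated_convergence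
      (bound := fun t => Real.exp (-t) * (1 + |Real.log t|) ^ m)
    · filter_upwards with n
      exact (((hmeasF n).indicator measurableSet_Ioo).aestronglyMeasurable)
    · filter_upwards [hlog_top.eventually_ge_atTop 1] with n hn1
      filter_upwards with t
      by_cases ht : t ∈ Ioo (0:ℝ) (n:ℝ)
      · obtain ⟨ht0, htn⟩ := ht
        have hln : (1:ℝ) ≤ Real.log n := hn1
        have hlt : Real.log t ≤ Real.log n := by
          rcases le_or_gt t 1 with h | h
          · exact (Real.log_nonpos ht0.le h).trans (by linarith)
          · exact Real.log_le_log (by linarith) htn.le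
        set r : ℝ := (Real.log n - Real.log t) / Real.log n with hr
        have hr0 : 0 ≤ r := div_nonneg (by linarith) (by linarith)
        have hr1 : r ≤ 1 + |Real.log t| := by
          rw [hr, sub_div, div_self (by linarith : Real.log (n:ℝ) ≠ 0)]
          have h1 : |Real.log t / Real.log n| ≤ |Real.log t| := by
            rw [abs_div]
            exact div_le_self (abs_nonneg _) (by rw [abs_of_nonneg (by linarith)]; linarith)
          have h2 := neg_abs_le (Real.log t / Real.log n)
          linarith
        rw [hF]
        simp only [indicator_of_mem (show t ∈ Ioo (0:ℝ) (n:ℝ) from ⟨ht0, htn⟩)]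
        rw [Real.norm_eq_abs, abs_of_nonneg (mul_nonneg (Real.exp_nonneg _) (pow_nonneg hr0 m))]
        exact mul_le_mul_of_nonneg_left (pow_le_pow_left₀ hr0 hr1 m) (Real.exp_nonneg _)
      · rw [hF]
        simp only [indicator_of_notMem ht]
        rw [norm_zero]
        positivity
    · exact aux_bound_integrable m
    · filter_upwards [ae_restrict_mem measurableSet_Ioi] with t ht
      have ht0 : (0:ℝ) < t := ht
      have h0 : Tendsto (fun n : ℕ => Real.log t / Real.log n) atTop (nhds 0) :=
        tendsto_const_nhds.div_atTop hlog_top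
      have h1 : Tendsto (fun n : ℕ =>
          Real.exp (-t) * (1 - Real.log t / Real.log n) ^ m) atTop
          (nhds (Real.exp (-t))) := by
        have hsub : Tendsto (fun n : ℕ => (1:ℝ) - Real.log t / Real.log n) atTop
            (nhds (1 - 0)) := Tendsto.sub tendsto_const_nhds h0
        have := Tendsto.const_mul (Real.exp (-t)) (hsub.pow m)
        simpa using this
      refine Tendsto.congr' ?_ h1
      filter_upwards [hlog_top.eventually_ge_atTop 1,
        tendsto_natCast_atTop_atTop.eventually_gt_atTop t] with n hn1 hnt
      rw [hF]
      simp only [indicator_of_mem (show t ∈ Ioo (0:ℝ) (n:ℝ) from ⟨ht0, hnt⟩)]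
      rw [sub_div, div_self (by linarith : Real.log (n:ℝ) ≠ 0)]
  refine Tendsto.congr' ?_ key
  filter_upwards [eventually_ge_atTop 1, hlog_top.eventually_ge_atTop 1] with n hn1 hln1
  have hn0 : (0:ℝ) < n := by exact_mod_cast hn1
  -- step 1: rewrite the indicator integral as an integral over Ioo 0 n
  rw [hF, integral_indicator measurableSet_Ioo, Measure.restrict_restrict measurableSet_Ioo,
    inter_eq_self_of_subset_left Ioo_subset_Ioi_self]
  -- step 2: change of variables
  have hsubst : (n:ℝ) • (∫ z in Ioo (0:ℝ) 1, Real.exp (-(n:ℝ) * z) * (Real.log (1 / z)) ^ m)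
      = ∫ t in Ioo (0:ℝ) (n:ℝ), Real.exp (-t) * (Real.log ((n:ℝ) / t)) ^ m := by
    have h2 : (∫ t in (0:ℝ)..(n:ℝ), Real.exp (-((n:ℝ) * (t / n))) * (Real.log (1 / (t / n))) ^ m)
        = (n:ℝ) • ∫ z in (0:ℝ)/(n:ℝ)..(n:ℝ)/(n:ℝ),
            Real.exp (-((n:ℝ) * z)) * (Real.log (1 / z)) ^ m :=
      intervalIntegral.integral_comp_div
        (fun z => Real.exp (-((n:ℝ) * z)) * (Real.log (1 / z)) ^ m) hn0.ne'
    rw [zero_div, div_self hn0.ne'] at h2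
    have h3 : ∀ t : ℝ, Real.exp (-((n:ℝ) * (t / n))) * (Real.log (1 / (t / n))) ^ m
        = Real.exp (-t) * (Real.log ((n:ℝ) / t)) ^ m := by
      intro t
      rw [one_div_div, mul_div_cancel₀ _ hn0.ne']
    simp only [h3] at h2
    simp only [neg_mul] at h2 ⊢
    rw [intervalIntegral.integral_of_le hn0.le, integral_Ioc_eq_integral_Ioo,
      intervalIntegral.integral_of_le zero_le_one, integral_Ioc_eq_integral_Ioo] at h2
    exact h2.symm
  -- step 3: combine
  have hcalc : (n : ℝ) / (Real.log n) ^ m *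
      ∫ z in Ioo (0:ℝ) 1, Real.exp (-(n:ℝ) * z) * (Real.log (1 / z)) ^ m
      = (1 / (Real.log n) ^ m) *
        ∫ t in Ioo (0:ℝ) (n:ℝ), Real.exp (-t) * (Real.log ((n:ℝ) / t)) ^ m := by
    rw [← hsubst, smul_eq_mul]; ring
  rw [eq_comm, hcalc, ← integral_const_mul]
  apply setIntegral_congr_fun measurableSet_Ioo
  intro t ht
  simp only
  rw [Real.log_div hn0.ne' ht.1.ne', div_pow]
  ring
end
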